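/- arXiv:1306.6843 — 6 statements merged into one kernel-verified Lean document; each statement's English description precedes it below -/
import Mathlib

section
/- Let G' be an EAMP CG over W ∪ ε (W ⊆ V) and B ∈ W. Let [G']_{\{B\}} be the graph obtained by adding an edge A → C for every pair of edges A → B and B → C in G' (A, C ≠ B) and then removing B and all edges it participates in. Then [G']_{\{B\}} is again a chain graph (has no semidirected cycle), and its undirected edges still join only error nodes, which have no incoming directed edges. -/
/- Mixed graphs with directed and undirected edges. -/
structure MixedGraph (γ : Type*) where
  dir : γ → γ → Prop
  undir : γ → γ → Prop
  undir_symm : ∀ a b, undir a b → undir b a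

namespace MixedGraph

variable {β : Type*} (G : MixedGraph β)

/-- Two nodes are adjacent if joined by some edge. -/
def adj (a b : β) : Prop := G.dir a b ∨ G.dir b a ∨ G.undir a b

/-- The graph is simple: no loops and at most one edge between any pair. -/
def Simple : Prop :=
  (∀ a, ¬ G.dir a a) ∧ (∀ a, ¬ G.undir a a) ∧
  (∀ a b, G.dir a b → ¬ G.dir b a) ∧ (∀ a b, G.dir a b → ¬ G.undir a b)

/-- A semidirected cycle: a cycle whose first edge is directed and whose other
edges are directed or undirected (all pointing forwards). -/
def HasSemidirectedCycle : Prop :=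
  ∃ (n : ℕ) (f : Fin (n + 2) → β),
    f 0 = f (Fin.last (n + 1)) ∧ G.dir (f 0) (f 1) ∧
    ∀ i : Fin (n + 1), G.dir (f i.castSucc) (f i.succ) ∨ G.undir (f i.castSucc) (f i.succ)

/-- A chain graph: a simple graph with no semidirected cycle. -/
def IsChainGraph : Prop := G.Simple ∧ ¬ G.HasSemidirectedCycle

/-- A DAG: a chain graph with no undirected edges. -/
def IsDAG : Prop := G.IsChainGraph ∧ ∀ a b, ¬ G.undir a b

/-- Parents of a set of nodes. -/
def pa (X : Set β) : Set β := {v | v ∉ X ∧ ∃ x ∈ X, G.dir v x}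

/-- Strict ascendants of a set of nodes (strictly descending route to the set). -/
def san (W : Set β) : Set β := {v | v ∉ W ∧ ∃ w ∈ W, Relation.TransGen G.dir v w}

/-- B is a triplex node between A and C: A → B ← C, A → B − C, or A − B ← C. -/
def triplex (A B C : β) : Prop :=
  (G.dir A B ∧ G.dir C B) ∨ (G.dir A B ∧ G.undir B C) ∨ (G.undir A B ∧ G.dir C B)

/-- B is a non-triplex node between A and C. -/
def nontriplex (A B C : β) : Prop :=
  G.adj A B ∧ G.adj B C ∧ ¬ G.triplex A B C

/-- A route: a nonempty sequence of consecutively adjacent nodes. -/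
def IsRoute (l : List β) : Prop := l ≠ [] ∧ l.Chain' G.adj

/-- A path that is open given the determined set `D` (AMP path-based semantics). -/
def AMPOpenPath (D : Set β) (l : List β) : Prop :=
  G.IsRoute l ∧ l.Nodup ∧
  (∀ A B C, [A, B, C] <:+: l → G.triplex A B C → B ∈ D ∪ G.san D) ∧
  (∀ A B C, [A, B, C] <:+: l → G.nontriplex A B C → B ∈ D →
    (G.undir A B ∧ G.undir B C ∧ ∃ p ∈ G.pa {B}, p ∉ D))

/-- A route that is open given the determined set `D` (AMP route-based semantics). -/
def AMPOpenRoute (D : Set β) (l : List β) : Prop :=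
  G.IsRoute l ∧
  (∀ A B C, [A, B, C] <:+: l → G.triplex A B C → B ∈ D) ∧
  (∀ A B C, [A, B, C] <:+: l → G.nontriplex A B C → B ∉ D)

/-- AMP separation (path-based) of X and Y given determined set D. -/
def AMPSep (D X Y : Set β) : Prop :=
  ∀ (l : List β) (x y : β), x ∈ X → y ∈ Y → l.head? = some x → l.getLast? = some y →
    ¬ G.AMPOpenPath D l

/-- AMP separation (route-based) of X and Y given determined set D. -/
def AMPSepRoute (D X Y : Set β) : Prop :=
  ∀ (l : List β) (x y : β), x ∈ X → y ∈ Y → l.head? = some x → l.getLast? = some y →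
    ¬ G.AMPOpenRoute D l

/-- `s` is a collider section of the route `l`: a maximal undirected subroute of `l`
entered by arrowheads at both ends. -/
def IsColliderSection (l s : List β) : Prop :=
  s ≠ [] ∧ List.Chain' G.undir s ∧
  ∃ pre post A C, l = pre ++ s ++ post ∧
    pre.getLast? = some A ∧ post.head? = some C ∧
    (∀ b, s.head? = some b → G.dir A b) ∧ (∀ b, s.getLast? = some b → G.dir C b) ∧
    (∀ a b, pre.getLast? = some a → s.head? = some b → ¬ G.undir a b) ∧
    (∀ a b, s.getLast? = some a → post.head? = some b → ¬ G.undir a b)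

/-- `s` is a non-collider section of the route `l`: a maximal undirected subroute of `l`
not entered by arrowheads at both ends. -/
def IsNonColliderSection (l s : List β) : Prop :=
  s ≠ [] ∧ List.Chain' G.undir s ∧
  ∃ pre post, l = pre ++ s ++ post ∧
    (∀ a b, pre.getLast? = some a → s.head? = some b → ¬ G.undir a b) ∧
    (∀ a b, s.getLast? = some a → post.head? = some b → ¬ G.undir a b) ∧
    ¬ ((∃ A, pre.getLast? = some A ∧ ∀ b, s.head? = some b → G.dir A b) ∧
       (∃ C, post.head? = some C ∧ ∀ b, s.getLast? = some b → G.dir C b))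

/-- A route that is open given the determined set `D` (LWF semantics). -/
def LWFOpenRoute (D : Set β) (l : List β) : Prop :=
  G.IsRoute l ∧
  (∀ s, G.IsColliderSection l s → ∃ x ∈ s, x ∈ D) ∧
  (∀ s, G.IsNonColliderSection l s → ∀ x ∈ s, x ∉ D)

/-- LWF separation of X and Y given determined set D. -/
def LWFSep (D X Y : Set β) : Prop :=
  ∀ (l : List β) (x y : β), x ∈ X → y ∈ Y → l.head? = some x → l.getLast? = some y →
    ¬ G.LWFOpenRoute D l

/-- Closure of Z under a set `det` of deterministic relationships: `(S, a) ∈ det`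
means that `a` is a function of `S`. -/
inductive Determined (det : Set (Set β × β)) (Z : Set β) : β → Prop
  | base : ∀ a, a ∈ Z → Determined det Z a
  | step : ∀ (S : Set β) (a : β), (S, a) ∈ det → (∀ b ∈ S, Determined det Z b) →
      Determined det Z a

/-- The set D(Z) of nodes determined by Z. -/
def DSet (det : Set (Set β × β)) (Z : Set β) : Set β := {a | Determined det Z a}

end MixedGraph

section EAMP

variable {α : Type*}

/-- Directed edges of the EAMP CG: `inl` nodes are the original nodes,
`inr` nodes are the error nodes. -/
def eampDir (G : MixedGraph α) : (α ⊕ α) → (α ⊕ α) → Prop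
  | Sum.inl x, Sum.inl y => G.dir x y
  | Sum.inr x, Sum.inl y => x = y
  | _, _ => False

/-- Undirected edges of the EAMP CG: `ε^A − ε^B` for each `A − B` of G. -/
def eampUndir (G : MixedGraph α) : (α ⊕ α) → (α ⊕ α) → Prop
  | Sum.inr x, Sum.inr y => G.undir x y
  | _, _ => False

/-- The EAMP CG G' of an AMP CG G: add `ε^A → A` for each node A and replace
each undirected edge `A − B` by `ε^A − ε^B`. -/
def eamp (G : MixedGraph α) : MixedGraph (α ⊕ α) where
  dir := eampDir G
  undir := eampUndir G
  undir_symm := by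
    rintro (x | x) (y | y) h <;>
      simp only [eampUndir] at h ⊢ <;>
      first
        | exact h.elim
        | exact G.undir_symm _ _ h

/-- The parents of A in G, embedded as nodes of the EAMP CG. -/
def eampPa (G : MixedGraph α) (A : α) : Set (α ⊕ α) := {x | ∃ B, G.dir B A ∧ x = Sum.inl B}

/-- The deterministic relationships of the EAMP CG: each A is a function of
`pa_G(A) ∪ {ε^A}`, and each `ε^A` is a function of `pa_G(A) ∪ {A}`. -/
def eampDet (G : MixedGraph α) : Set (Set (α ⊕ α) × (α ⊕ α)) :=
  {p | (∃ A, p = (eampPa G A ∪ {Sum.inr A}, Sum.inl A)) ∨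
       (∃ A, p = (eampPa G A ∪ {Sum.inl A}, Sum.inr A))}

/-- Marginalize the node B out of G: add `A → C` for every pair `A → B`, `B → C`,
then delete B together with all edges it participates in. -/
def marg {β : Type*} (G : MixedGraph β) (B : β) : MixedGraph β where
  dir a c := a ≠ B ∧ c ≠ B ∧ (G.dir a c ∨ (G.dir a B ∧ G.dir B c))
  undir a c := a ≠ B ∧ c ≠ B ∧ G.undir a c
  undir_symm := by
    rintro a c ⟨h1, h2, h3⟩
    exact ⟨h2, h1, G.undir_symm _ _ h3⟩

/-- Marginalize a list of nodes out of G, one at a time. -/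
def margList {β : Type*} (G : MixedGraph β) (L : List β) : MixedGraph β := L.foldl marg G

/-- Directed edges of the DAG G'': those of G' among `V ∪ ε`, plus
`ε^A → S_{ε^Aε^B} ← ε^B` for each undirected edge `ε^A − ε^B` of G'. -/
def dagDir (G : MixedGraph α) : ((α ⊕ α) ⊕ Sym2 α) → ((α ⊕ α) ⊕ Sym2 α) → Prop
  | Sum.inl x, Sum.inl y => (eamp G).dir x y
  | Sum.inl (Sum.inr x), Sum.inr s => ∃ y, G.undir x y ∧ s = s(x, y)
  | _, _ => False

/-- The DAG G'' obtained from G' by replacing each `ε^A − ε^B` with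
`ε^A → S_{ε^Aε^B} ← ε^B`, where the selection nodes are fresh. -/
def dagOf (G : MixedGraph α) : MixedGraph ((α ⊕ α) ⊕ Sym2 α) where
  dir := dagDir G
  undir _ _ := False
  undir_symm := by intro a b h; exact h.elim

/-- The set S of selection nodes of G''. -/
def selNodes (G : MixedGraph α) : Set ((α ⊕ α) ⊕ Sym2 α) :=
  {v | ∃ x y, G.undir x y ∧ v = Sum.inr s(x, y)}

/-- The deterministic relationships of G'' (the same as those of G'). -/
def dagDet (G : MixedGraph α) : Set (Set ((α ⊕ α) ⊕ Sym2 α) × ((α ⊕ α) ⊕ Sym2 α)) :=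
  {p | ∃ q ∈ eampDet G, p = (Sum.inl '' q.1, Sum.inl q.2)}

/-- Structural characterization of EAMP CGs over `W ∪ ε`: a chain graph whose
undirected edges join only error nodes and whose error nodes have no incoming
directed edges. -/
def IsEAMPStruct (G : MixedGraph (α ⊕ α)) : Prop :=
  G.IsChainGraph ∧
  (∀ a b, G.undir a b → (∃ x, a = Sum.inr x) ∧ ∃ y, b = Sum.inr y) ∧
  (∀ a x, ¬ G.dir a (Sum.inr x))

/-- K is a connectivity component: a maximal set connected by undirected paths. -/
def IsConnComp {β : Type*} (G : MixedGraph β) (K : Set β) : Prop :=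
  ∃ a, K = {b | Relation.ReflTransGen G.undir a b}

end EAMP

open Relation in
lemma rtg_of_rtg_aux {β : Type*} {r s : β → β → Prop}
    (h : ∀ x y, r x y → ReflTransGen s x y) {a b : β}
    (hab : ReflTransGen r a b) : ReflTransGen s a b := by
  induction hab with
  | refl => exact .refl
  | tail _ h2 ih => exact ih.trans (h _ _ h2)

open Relation in
lemma hasSDC_iff_aux {β : Type*} (G : MixedGraph β) :
    G.HasSemidirectedCycle ↔
      ∃ a b, G.dir a b ∧
        ReflTransGen (fun x y => G.dir x y ∨ G.undir x y) b a := by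
  constructor
  · rintro ⟨n, f, h0, h1, hchain⟩
    refine ⟨f 0, f 1, h1, ?_⟩
    have key : ∀ m : ℕ, 1 ≤ m → ∀ hm : m < n + 2,
        ReflTransGen (fun x y => G.dir x y ∨ G.undir x y) (f 1) (f ⟨m, hm⟩) := by
      intro m
      induction m with
      | zero => omega
      | succ k ih =>
        intro _ hm
        rcases Nat.eq_or_lt_of_le (Nat.one_le_iff_ne_zero.mpr (Nat.succ_ne_zero k)) with he | hl
        · have : (⟨k + 1, hm⟩ : Fin (n + 2)) = 1 := by
            ext; simp [Fin.val_one]; omega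
          rw [this]
        · have hk1 : 1 ≤ k := by omega
          have hk : k < n + 2 := by omega
          have step := hchain ⟨k, by omega⟩
          have e1 : (⟨k, by omega⟩ : Fin (n + 1)).castSucc = (⟨k, hk⟩ : Fin (n + 2)) := by
            ext; simp
          have e2 : (⟨k, by omega⟩ : Fin (n + 1)).succ = (⟨k + 1, hm⟩ : Fin (n + 2)) := by
            ext; simp
          rw [e1, e2] at step
          exact (ih hk1 hk).tail step
    have := key (n + 1) (by omega) (by omega)
    have hlast : (⟨n + 1, by omega⟩ : Fin (n + 2)) = Fin.last (n + 1) := rfl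
    rw [hlast, ← h0] at this
    exact this
  · rintro ⟨a, b, hd, hr⟩
    obtain ⟨l, hchain, hlast⟩ := List.exists_isChain_cons_of_relationReflTransGen hr
    refine ⟨l.length, fun i => (a :: b :: l).get (i.cast (by simp)), ?_, ?_, ?_⟩
    · show (a :: b :: l).get _ = (a :: b :: l).get _
      have : (a :: b :: l).get ⟨0, by simp⟩ = a := rfl
      rw [show ((0 : Fin (l.length + 2)).cast (by simp) : Fin (a :: b :: l).length)
            = ⟨0, by simp⟩ from rfl, this]
      have h2 : (a :: b :: l).get ((Fin.last (l.length + 1)).cast (by simp))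
          = (a :: b :: l).getLast (by simp) := by
        rw [List.getLast_eq_getElem]
        simp [List.get_eq_getElem]
      rw [h2]
      rw [List.getLast_cons (by simp)]
      exact hlast.symm
    · exact hd
    · intro i
      have hch : List.Chain' (fun x y => G.dir x y ∨ G.undir x y) (a :: b :: l) := by
        exact List.isChain_cons_cons.mpr ⟨Or.inl hd, hchain⟩
      have := List.isChain_iff_getElem.mp hch i.1 (by simp only [List.length_cons]; omega)
      have e1 : ((i.castSucc).cast (by simp) : Fin (a :: b :: l).length)
          = ⟨i.1, by simp only [List.length_cons]; omega⟩ := by ext; simp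
      have e2 : ((i.succ).cast (by simp) : Fin (a :: b :: l).length)
          = ⟨i.1 + 1, by simp only [List.length_cons]; omega⟩ := by ext; simp
      dsimp only
      rw [e1, e2]
      exact this

/-- marginalizing a node `B ∈ W` out of an EAMP CG yields again a
chain graph whose undirected edges join only error nodes, which have no
incoming directed edges. -/
theorem stmt12 {α : Type*} (G' : MixedGraph (α ⊕ α)) (h : IsEAMPStruct G') (B : α) :
    IsEAMPStruct (marg G' (Sum.inl B)) := by
  obtain ⟨⟨⟨hloop, huloop, hnotwo, hnomix⟩, hnocyc⟩, hundirerr, hnoin⟩ := h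
  have hnocyc' : ¬ ∃ a b, G'.dir a b ∧
      Relation.ReflTransGen (fun x y => G'.dir x y ∨ G'.undir x y) b a := by
    rw [← hasSDC_iff_aux]; exact hnocyc
  -- map marg edges to RTG in G'
  have hmap : ∀ x y, ((marg G' (Sum.inl B)).dir x y ∨ (marg G' (Sum.inl B)).undir x y) →
      Relation.ReflTransGen (fun x y => G'.dir x y ∨ G'.undir x y) x y := by
    rintro x y (⟨_, _, (hd | ⟨h1, h2⟩)⟩ | ⟨_, _, hu⟩)
    · exact Relation.ReflTransGen.single (Or.inl hd)
    · exact (Relation.ReflTransGen.single (r := fun x y => G'.dir x y ∨ G'.undir x y) (Or.inl h1)).tail (Or.inl h2)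
    · exact Relation.ReflTransGen.single (Or.inr hu)
  refine ⟨⟨⟨?_, ?_, ?_, ?_⟩, ?_⟩, ?_, ?_⟩
  · rintro a ⟨_, _, (hd | ⟨h1, h2⟩)⟩
    · exact hloop a hd
    · exact hnotwo _ _ h1 h2
  · rintro a ⟨_, _, hu⟩
    exact huloop a hu
  · rintro a b ⟨hna, hnb, (hd | ⟨h1, h2⟩)⟩ ⟨_, _, (hd' | ⟨h1', h2'⟩)⟩
    · exact hnotwo _ _ hd hd'
    · exact hnocyc' ⟨a, b, hd,
        (Relation.ReflTransGen.single (r := fun x y => G'.dir x y ∨ G'.undir x y) (Or.inl h1')).tail (Or.inl h2')⟩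
    · exact hnocyc' ⟨b, a, hd',
        (Relation.ReflTransGen.single (r := fun x y => G'.dir x y ∨ G'.undir x y) (Or.inl h1)).tail (Or.inl h2)⟩
    · exact hnotwo _ _ h2 h1'
  · rintro a b ⟨hna, hnb, (hd | ⟨h1, h2⟩)⟩ ⟨_, _, hu⟩
    · exact hnomix _ _ hd hu
    · obtain ⟨_, ⟨y, rfl⟩⟩ := hundirerr _ _ hu
      exact hnoin _ _ h2
  · rw [hasSDC_iff_aux]
    rintro ⟨a, b, ⟨hna, hnb, (hd | ⟨h1, h2⟩)⟩, hr⟩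
    · exact hnocyc' ⟨a, b, hd, rtg_of_rtg_aux hmap hr⟩
    · exact hnocyc' ⟨Sum.inl B, b, h2,
        (rtg_of_rtg_aux hmap hr).tail (Or.inl h1)⟩
  · rintro a b ⟨_, _, hu⟩
    exact hundirerr _ _ hu
  · rintro a x ⟨_, _, (hd | ⟨h1, h2⟩)⟩
    · exact hnoin _ _ hd
    · exact hnoin _ _ h2
end

section
/- Theorem 4 (closure under marginalization): Let G' be an EAMP CG over W ∪ ε and L ⊆ W, and let [G']_L be the EAMP CG obtained by marginalizing out the nodes of L (for each B ∈ L in turn: add A → C for every pair A → B, B → C, then delete B and its incident edges). Then for all disjoint X, Y, Z ⊆ W \ L: X ⊥_{G'} Y | Z (AMP separation with deterministic nodes) holds if and only if X ⊥_{[G']_L} Y | Z holds. That is, [I_{AMP}(G')]_{L ∪ ε} = [I_{AMP}([G']_L)]_ε. -/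
/-!
Marginalizing the nodes of `L` one at a time, it suffices to remove a single node `B` of `V`
outside `X ∪ Y` such that neither `B` nor its error node `ε^B` is determined by `Z` (only the
nodes of `Z` and their error nodes are). No arrowhead points into an endpoint of an undirected
edge, so the triplex nodes of a route are its colliders, and we may work in the graph that has both
`B` and the new edges `u → v` for `u → B → v`.

An open route of the marginal graph yields one of the original graph by subdividing each new edge
as `u → B → v`: `B` becomes a non-collider outside `D`, and the arrowheads at `u` and `v` do not
change. Conversely, an open route passes `B` as a non-collider, i.e. as `u → B → c`, `u ← B ← c`
or `u ← B → c`; the first two are replaced by the new edge between `u` and `c`, the last by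
`u ← ε^B → c`, since `ε^B` is a parent of `B` outside `D`.
-/

lemma List.triple_infix_cons_cons_iff {α : Type*} {a b c x y : α} {l : List α} :
    [a, b, c] <:+: x :: y :: l ↔ (a = x ∧ b = y ∧ l.head? = some c) ∨ [a, b, c] <:+: y :: l := by
  rw [List.infix_cons_iff]
  cases l with
  | nil => simp
  | cons d l => simp [eq_comm (a := d)]

namespace MixedGraph

variable {β : Type*} {G H : MixedGraph β} {B : β} {D : Set β}

def DirAcyclic (G : MixedGraph β) : Prop := ∀ u, ¬ Relation.TransGen G.dir u u

def NoArrowIntoUndir (G : MixedGraph β) : Prop := ∀ u v w, G.undir u v → ¬ G.dir w u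

lemma DirAcyclic.irrefl (hG : G.DirAcyclic) (u : β) : ¬ G.dir u u :=
  fun h => hG u (.single h)

lemma DirAcyclic.asymm (hG : G.DirAcyclic) {u v : β} (h : G.dir u v) : ¬ G.dir v u :=
  fun h' => hG u (.tail (.single h) h')

lemma exists_dirWalk_of_transGen {a b : β} (h : Relation.TransGen G.dir a b) :
    ∃ n, ∃ f : Fin (n + 2) → β, f 0 = a ∧ f (Fin.last (n + 1)) = b ∧
      ∀ i : Fin (n + 1), G.dir (f i.castSucc) (f i.succ) := by
  induction h using Relation.TransGen.head_induction_on with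
  | single h => exact ⟨0, ![_, _], rfl, rfl, fun i => by fin_cases i; exact h⟩
  | head hac _ ih =>
    obtain ⟨n, f, h0, hlast, hf⟩ := ih
    refine ⟨n + 1, Fin.cons _ f, rfl, by simpa using hlast, fun i => ?_⟩
    exact Fin.cases (by simpa [h0] using hac) (fun j => by simpa using hf j) i

lemma DirAcyclic.of_not_hasSemidirectedCycle (h : ¬ G.HasSemidirectedCycle) : G.DirAcyclic := by
  intro a ha
  obtain ⟨n, f, h0, hlast, hf⟩ := exists_dirWalk_of_transGen ha
  exact h ⟨n, f, h0.trans hlast.symm, by simpa using hf 0, fun i => Or.inl (hf i)⟩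

lemma DirAcyclic.of_le_transGen (hH : H.DirAcyclic)
    (h : G.dir ≤ Relation.TransGen H.dir) : G.DirAcyclic :=
  fun u hu => hH u (Relation.TransGen.closed h u u hu)

lemma adj_symm {u v : β} (h : G.adj u v) : G.adj v u := by
  rcases h with h | h | h
  · exact Or.inr (Or.inl h)
  · exact Or.inl h
  · exact Or.inr (Or.inr (G.undir_symm _ _ h))

lemma triplex_iff_of_noArrowIntoUndir (hG : G.NoArrowIntoUndir) {a b c : β} :
    G.triplex a b c ↔ G.dir a b ∧ G.dir c b := by
  refine ⟨?_, Or.inl⟩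
  rintro (h | ⟨hab, hbc⟩ | ⟨hab, hcb⟩)
  · exact h
  · exact absurd hab (hG b c a hbc)
  · exact absurd hcb (hG b a c (G.undir_symm _ _ hab))

def ColliderOpen (G : MixedGraph β) (D : Set β) : List β → Prop
  | a :: b :: l => G.adj a b ∧ (∀ c ∈ l.head?, b ∈ D ↔ G.dir a b ∧ G.dir c b) ∧
      ColliderOpen G D (b :: l)
  | _ => True

@[simp] lemma colliderOpen_nil : ColliderOpen G D [] := trivial

@[simp] lemma colliderOpen_singleton (a : β) : ColliderOpen G D [a] := trivial

@[simp] lemma colliderOpen_cons_cons {a b : β} {l : List β} :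
    ColliderOpen G D (a :: b :: l) ↔ G.adj a b ∧ (∀ c ∈ l.head?, b ∈ D ↔ G.dir a b ∧ G.dir c b) ∧
      ColliderOpen G D (b :: l) := Iff.rfl

lemma ColliderOpen.tail {a : β} {l : List β} (h : ColliderOpen G D (a :: l)) :
    ColliderOpen G D l := by
  cases l with
  | nil => trivial
  | cons b l => exact h.2.2

lemma ColliderOpen.isChain : ∀ {l : List β}, ColliderOpen G D l → l.IsChain G.adj
  | [], _ => .nil
  | [a], _ => .singleton a
  | _ :: _ :: _, h => List.isChain_cons_cons.mpr ⟨h.1, h.2.2.isChain⟩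

lemma colliderOpen_iff_forall_infix : ∀ {l : List β},
    ColliderOpen G D l ↔ l.IsChain G.adj ∧
      ∀ a b c, [a, b, c] <:+: l → (b ∈ D ↔ G.dir a b ∧ G.dir c b)
  | [] => by simp [List.infix_nil]
  | [x] => by simp [List.infix_cons_iff]
  | x :: y :: l => by
    simp only [colliderOpen_cons_cons, colliderOpen_iff_forall_infix (l := y :: l),
      List.isChain_cons_cons, List.triple_infix_cons_cons_iff]
    constructor
    · rintro ⟨hxy, hy, hch, hl⟩
      refine ⟨⟨hxy, hch⟩, ?_⟩
      rintro a b c (⟨rfl, rfl, hc⟩ | h)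
      · exact hy c hc
      · exact hl a b c h
    · rintro ⟨⟨hxy, hch⟩, h⟩
      exact ⟨hxy, fun c hc => h x y c (Or.inl ⟨rfl, rfl, hc⟩), hch,
        fun a b c hi => h a b c (Or.inr hi)⟩

lemma ampOpenRoute_iff (hG : G.NoArrowIntoUndir) {l : List β} :
    G.AMPOpenRoute D l ↔ l ≠ [] ∧ ColliderOpen G D l := by
  simp only [AMPOpenRoute, IsRoute, nontriplex, triplex_iff_of_noArrowIntoUndir hG,
    colliderOpen_iff_forall_infix]
  constructor
  · rintro ⟨⟨hne, hch⟩, hcol, hncol⟩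
    refine ⟨hne, hch, fun a b c hi => ⟨fun hb => ?_, hcol a b c hi⟩⟩
    have habc : [a, b, c].IsChain G.adj := hch.infix hi
    simp only [List.isChain_cons_cons, List.isChain_singleton, and_true] at habc
    by_contra h
    exact hncol a b c hi ⟨habc.1, habc.2, h⟩ hb
  · rintro ⟨hne, hch, h⟩
    exact ⟨⟨hne, hch⟩, fun a b c hi => (h a b c hi).2,
      fun a b c hi hn hb => hn.2.2 ((h a b c hi).1 hb)⟩

lemma ColliderOpen.cons_of_dir_iff {w x v : β} {t : List β} (h : ColliderOpen G D (w :: v :: t))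
    (hxv : G.adj x v) (hv : G.dir x v ↔ G.dir w v) : ColliderOpen G D (x :: v :: t) :=
  ⟨hxv, fun c hc => by rw [hv]; exact h.2.1 c hc, h.2.2⟩

lemma colliderOpen_congr {G' : MixedGraph β} {S : β → β → Prop}
    (hS : ∀ u v, S u v → (G.adj u v ↔ G'.adj u v) ∧ (G.dir u v ↔ G'.dir u v) ∧
      (G.dir v u ↔ G'.dir v u)) :
    ∀ {l : List β}, l.IsChain S → (ColliderOpen G D l ↔ ColliderOpen G' D l)
  | [], _ | [_], _ => Iff.rfl
  | a :: b :: l, hl => by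
    rw [List.isChain_cons_cons] at hl
    obtain ⟨hadj, hab, -⟩ := hS a b hl.1
    rw [colliderOpen_cons_cons, colliderOpen_cons_cons, hadj, hab, colliderOpen_congr hS hl.2]
    refine and_congr_right fun _ => and_congr_left fun _ => forall₂_congr fun c hc => ?_
    cases l with
    | nil => simp at hc
    | cons d l =>
      obtain rfl : d = c := by simpa using hc
      rw [(hS b d (List.isChain_cons_cons.mp hl.2).1).2.2]

def Reroutes (G : MixedGraph β) (D : Set β) (l l' : List β) : Prop :=
  ColliderOpen G D l' ∧ l'.head? = l.head? ∧ l'.getLast? = l.getLast? ∧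
    ∀ w, ColliderOpen G D (w :: l) → ColliderOpen G D (w :: l')

lemma Reroutes.refl {l : List β} (h : ColliderOpen G D l) : Reroutes G D l l :=
  ⟨h, rfl, rfl, fun _ => id⟩

lemma Reroutes.trans {l l' l'' : List β} (h : Reroutes G D l l') (h' : Reroutes G D l' l'') :
    Reroutes G D l l'' :=
  ⟨h'.1, h'.2.1.trans h.2.1, h'.2.2.1.trans h.2.2.1, fun w hw => h'.2.2.2 w (h.2.2.2 w hw)⟩

lemma Reroutes.cons {u : β} {l l' : List β} (h : Reroutes G D l l')
    (hu : ColliderOpen G D (u :: l)) : Reroutes G D (u :: l) (u :: l') := by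
  obtain ⟨-, hhead, hlast, hw⟩ := h
  refine ⟨hw u hu, rfl, by simp [List.getLast?_cons, hlast], fun w hwu => ?_⟩
  cases l with
  | nil =>
    obtain rfl : l' = [] := by simpa using hhead
    exact hwu
  | cons c l =>
    obtain ⟨c', l', rfl⟩ := List.exists_cons_of_ne_nil (l := l') (by rintro rfl; simp at hhead)
    obtain rfl : c' = c := by simpa using hhead
    exact ⟨hwu.1, hwu.2.1, hw u hwu.2.2⟩

lemma Reroutes.of_dir_iff {u c c' : β} {r r' : List β} (h : ColliderOpen G D (u :: c' :: r'))
    (hlast : (c' :: r').getLast? = (c :: r).getLast?) (hu : G.dir c' u ↔ G.dir c u) :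
    Reroutes G D (u :: c :: r) (u :: c' :: r') :=
  ⟨h, rfl, by simpa [List.getLast?_cons] using hlast, fun _ hw =>
    ⟨hw.1, fun d hd => by
      obtain rfl : c' = d := by simpa using hd
      simpa [hu] using hw.2.1 c (by simp), h⟩⟩

def IsDetour (G : MixedGraph β) (u x v : β) : Prop :=
  (G.dir u x ∧ G.dir x v ∧ G.dir u v) ∨ (G.dir v x ∧ G.dir x u ∧ G.dir v u)

namespace IsDetour

variable {u x v : β}

lemma symm (h : G.IsDetour u x v) : G.IsDetour v x u := Or.symm h

lemma adj_left (h : G.IsDetour u x v) : G.adj u x := by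
  rcases h with ⟨h, -⟩ | ⟨-, h, -⟩
  · exact Or.inl h
  · exact Or.inr (Or.inl h)

lemma adj_right (h : G.IsDetour u x v) : G.adj x v := adj_symm h.symm.adj_left

lemma adj_ends (h : G.IsDetour u x v) : G.adj u v := by
  rcases h with ⟨-, -, h⟩ | ⟨-, -, h⟩
  · exact Or.inl h
  · exact Or.inr (Or.inl h)

lemma dir_iff (hG : G.DirAcyclic) (h : G.IsDetour u x v) : G.dir x u ↔ G.dir v u := by
  rcases h with ⟨hux, -, huv⟩ | ⟨-, hxu, hvu⟩
  · exact iff_of_false (hG.asymm hux) (hG.asymm huv)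
  · exact iff_of_true hxu hvu

lemma not_collider (hG : G.DirAcyclic) (h : G.IsDetour u x v) : ¬ (G.dir u x ∧ G.dir v x) := by
  rcases h with ⟨-, hxv, -⟩ | ⟨-, hxu, -⟩
  · exact fun h => hG.asymm hxv h.2
  · exact fun h => hG.asymm hxu h.1

end IsDetour

lemma Reroutes.insert_detour (hG : G.DirAcyclic) {u x v : β} {t : List β}
    (hd : G.IsDetour u x v) (hx : x ∉ D) (h : ColliderOpen G D (u :: v :: t)) :
    Reroutes G D (u :: v :: t) (u :: x :: v :: t) :=
  .of_dir_iff ⟨hd.adj_left, fun c hc => by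
      obtain rfl : v = c := by simpa using hc
      exact iff_of_false hx (hd.not_collider hG),
    h.cons_of_dir_iff hd.adj_right (hd.symm.dir_iff hG)⟩ (by simp) (hd.dir_iff hG)

lemma Reroutes.erase_detour (hG : G.DirAcyclic) {u x v : β} {t : List β}
    (hd : G.IsDetour u x v) (h : ColliderOpen G D (u :: x :: v :: t)) :
    Reroutes G D (u :: x :: v :: t) (u :: v :: t) :=
  .of_dir_iff (h.tail.cons_of_dir_iff hd.adj_ends (hd.symm.dir_iff hG).symm) (by simp)
    (hd.dir_iff hG).symm

lemma Reroutes.replace_fork (hG : G.DirAcyclic) {u x y v : β} {t : List β}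
    (hxu : G.dir x u) (hxv : G.dir x v) (hyu : G.dir y u) (hyv : G.dir y v) (hy : y ∉ D)
    (h : ColliderOpen G D (u :: x :: v :: t)) :
    Reroutes G D (u :: x :: v :: t) (u :: y :: v :: t) :=
  .of_dir_iff ⟨Or.inr (Or.inl hyu), fun _ _ => iff_of_false hy fun h => hG.asymm hyu h.1,
    h.tail.cons_of_dir_iff (Or.inl hyv) (iff_of_true hyv hxv)⟩ (by simp) (iff_of_true hyu hxu)

/-- Unlike `marg H B` this keeps `B`, so that routes through `B` and routes using the new edges
live in one graph. -/
def shortcut (H : MixedGraph β) (B : β) : MixedGraph β where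
  dir u v := H.dir u v ∨ (H.dir u B ∧ H.dir B v)
  undir := H.undir
  undir_symm := H.undir_symm

lemma shortcut_dir_le_transGen : (H.shortcut B).dir ≤ Relation.TransGen H.dir := by
  rintro u v (h | ⟨huB, hBv⟩)
  · exact .single h
  · exact .tail (.single huB) hBv

lemma DirAcyclic.shortcut (hH : H.DirAcyclic) : (H.shortcut B).DirAcyclic :=
  hH.of_le_transGen shortcut_dir_le_transGen

lemma DirAcyclic.marg (hH : H.DirAcyclic) : (marg H B).DirAcyclic :=
  hH.of_le_transGen fun u v h => shortcut_dir_le_transGen u v h.2.2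

lemma NoArrowIntoUndir.marg (hund : H.NoArrowIntoUndir) : (marg H B).NoArrowIntoUndir := by
  rintro u v w ⟨-, -, huv⟩ ⟨-, -, h | ⟨-, h⟩⟩ <;> exact hund u v _ huv h

lemma shortcut_adj_to {u : β} (h : (H.shortcut B).adj u B) : H.adj u B := by
  rcases h with h | h | h
  · exact Or.inl (h.elim id And.left)
  · exact Or.inr (Or.inl (h.elim id And.right))
  · exact Or.inr (Or.inr h)

lemma shortcut_adj_from {v : β} (h : (H.shortcut B).adj B v) : H.adj B v :=
  adj_symm (shortcut_adj_to (adj_symm h))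

lemma isDetour_shortcut {u v : β} (huB : H.dir u B) (hBv : H.dir B v) :
    (H.shortcut B).IsDetour u B v :=
  Or.inl ⟨Or.inl huB, Or.inl hBv, Or.inr ⟨huB, hBv⟩⟩

lemma isDetour_shortcut_of_not_adj {u v : β} (h : (H.shortcut B).adj u v) (hn : ¬ H.adj u v) :
    (H.shortcut B).IsDetour u B v := by
  rcases h with h | h | h
  · exact h.elim (fun h => absurd (Or.inl h) hn) fun h => isDetour_shortcut h.1 h.2
  · exact h.elim (fun h => absurd (Or.inr (Or.inl h)) hn) fun h => (isDetour_shortcut h.1 h.2).symm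
  · exact absurd (Or.inr (Or.inr h)) hn

lemma shortcut_dir_iff_of_adj (hH : H.DirAcyclic) (hund : H.NoArrowIntoUndir) {u v : β}
    (h : H.adj u v) : (H.shortcut B).dir u v ↔ H.dir u v := by
  refine ⟨fun h' => h'.elim id fun ⟨huB, hBv⟩ => ?_, Or.inl⟩
  rcases h with h | h | h
  · exact h
  · exact absurd h (fun hvu => hH u (.tail (.tail (.single huB) hBv) hvu))
  · exact absurd hBv (hund v u B (H.undir_symm _ _ h))

lemma colliderOpen_shortcut_iff (hH : H.DirAcyclic) (hund : H.NoArrowIntoUndir) {l : List β}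
    (hl : l.IsChain H.adj) : ColliderOpen (H.shortcut B) D l ↔ ColliderOpen H D l :=
  colliderOpen_congr (fun _ _ h => ⟨iff_of_true (by unfold adj shortcut at *; tauto) h,
    shortcut_dir_iff_of_adj hH hund h, shortcut_dir_iff_of_adj hH hund (adj_symm h)⟩) hl

lemma colliderOpen_marg_iff {l : List β} (hl : B ∉ l) :
    ColliderOpen (marg H B) D l ↔ ColliderOpen (H.shortcut B) D l := by
  refine colliderOpen_congr (S := fun u v => u ≠ B ∧ v ≠ B) ?_ ?_
  · rintro u v ⟨hu, hv⟩
    have hdir {a b : β} (ha : a ≠ B) (hb : b ≠ B) : (marg H B).dir a b ↔ (H.shortcut B).dir a b :=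
      ⟨fun h => h.2.2, fun h => ⟨ha, hb, h⟩⟩
    have hundir : (marg H B).undir u v ↔ (H.shortcut B).undir u v :=
      ⟨fun h => h.2.2, fun h => ⟨hu, hv, h⟩⟩
    exact ⟨or_congr (hdir hu hv) (or_congr (hdir hv hu) hundir), hdir hu hv, hdir hv hu⟩
  · exact List.Pairwise.isChain (List.pairwise_of_forall_mem_list fun a ha b hb =>
      ⟨ne_of_mem_of_not_mem ha hl, ne_of_mem_of_not_mem hb hl⟩)

lemma exists_reroute_isChain (hH : H.DirAcyclic) (hBD : B ∉ D) :
    ∀ {l : List β}, ColliderOpen (H.shortcut B) D l →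
      ∃ l', Reroutes (H.shortcut B) D l l' ∧ l'.IsChain H.adj
  | [], h => ⟨[], .refl h, .nil⟩
  | u :: l, h => by
    obtain ⟨l', hl', hchain⟩ := exists_reroute_isChain hH hBD h.tail
    have hu := hl'.cons h
    cases l' with
    | nil => exact ⟨[u], hu, .singleton u⟩
    | cons v t =>
      by_cases huv : H.adj u v
      · exact ⟨_, hu, List.isChain_cons_cons.mpr ⟨huv, hchain⟩⟩
      · have hd := isDetour_shortcut_of_not_adj hu.1.1 huv
        refine ⟨u :: B :: v :: t, hu.trans (.insert_detour hH.shortcut hd hBD hu.1), ?_⟩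
        simp only [List.isChain_cons_cons]
        exact ⟨shortcut_adj_to hd.adj_left, shortcut_adj_from hd.adj_right, hchain⟩

lemma exists_reroute_bypass (hH : H.DirAcyclic) (hBund : ∀ u, ¬ H.undir B u) (hBD : B ∉ D)
    (hpar : ∀ v, H.dir B v → ∃ p ∉ D, H.dir p B) {u c : β} {t : List β}
    (h : ColliderOpen (H.shortcut B) D (u :: B :: c :: t)) (hc : B ∉ c :: t) :
    ∃ l', Reroutes (H.shortcut B) D (u :: B :: c :: t) l' ∧ B ∉ l'.tail := by
  have dir_of_adj {w : β} (hw : H.adj w B) : H.dir w B ∨ H.dir B w :=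
    hw.imp_right fun hw => hw.resolve_right fun hu => hBund w (H.undir_symm _ _ hu)
  rcases dir_of_adj (shortcut_adj_to h.1) with huB | hBu <;>
    rcases dir_of_adj (adj_symm (shortcut_adj_from h.2.2.1)) with hcB | hBc
  · exact absurd ((h.2.1 c rfl).2 ⟨Or.inl huB, Or.inl hcB⟩) hBD
  · exact ⟨u :: c :: t, .erase_detour hH.shortcut (isDetour_shortcut huB hBc) h, hc⟩
  · exact ⟨u :: c :: t, .erase_detour hH.shortcut (isDetour_shortcut hcB hBu).symm h, hc⟩
  · obtain ⟨p, hpD, hpB⟩ := hpar u hBu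
    refine ⟨u :: p :: c :: t, .replace_fork hH.shortcut (Or.inl hBu) (Or.inl hBc)
      (Or.inr ⟨hpB, hBu⟩) (Or.inr ⟨hpB, hBc⟩) hpD h, ?_⟩
    rintro (_ | ⟨_, hB⟩)
    · exact hH.irrefl _ hpB
    · exact hc hB

lemma exists_reroute_not_mem_tail (hH : H.DirAcyclic) (hBund : ∀ u, ¬ H.undir B u) (hBD : B ∉ D)
    (hpar : ∀ v, H.dir B v → ∃ p ∉ D, H.dir p B) :
    ∀ {l : List β}, ColliderOpen (H.shortcut B) D l → l.getLast? ≠ some B →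
      ∃ l', Reroutes (H.shortcut B) D l l' ∧ B ∉ l'.tail
  | [], h, _ => ⟨[], .refl h, by simp⟩
  | [u], h, _ => ⟨[u], .refl h, by simp⟩
  | u :: v :: l, h, hlast => by
    rw [List.getLast?_cons_cons] at hlast
    obtain ⟨l', hl', hB⟩ := exists_reroute_not_mem_tail hH hBund hBD hpar h.tail hlast
    have hu := hl'.cons h
    obtain ⟨w, t, rfl⟩ := List.exists_cons_of_ne_nil (l := l') (by rintro rfl; simpa using hl'.2.1)
    by_cases hw : w = B
    · subst hw
      cases t with
      | nil => exact absurd hl'.2.2.1.symm hlast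
      | cons c t =>
        obtain ⟨l'', h'', hB''⟩ := exists_reroute_bypass hH hBund hBD hpar hu.1 hB
        exact ⟨l'', hu.trans h'', hB''⟩
    · exact ⟨u :: w :: t, hu, fun hm => (List.mem_cons.mp hm).elim (fun e => hw e.symm) hB⟩

lemma not_mem_of_isChain_marg : ∀ {l : List β}, l.IsChain (marg H B).adj → l.head? ≠ some B →
    B ∉ l
  | [], _, _ => by simp
  | [u], _, h => by simpa [eq_comm] using h
  | u :: v :: l, hl, _ => by
    rw [List.isChain_cons_cons] at hl
    have huv : u ≠ B ∧ v ≠ B := by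
      rcases hl.1 with h | h | h
      exacts [⟨h.1, h.2.1⟩, ⟨h.2.1, h.1⟩, ⟨h.1, h.2.1⟩]
    rintro (_ | ⟨_, hB⟩)
    · exact huv.1 rfl
    · exact not_mem_of_isChain_marg hl.2 (by simpa using huv.2) hB

lemma AMPSepRoute.of_reroute {G G' : MixedGraph β} (hG : G.NoArrowIntoUndir)
    (hG' : G'.NoArrowIntoUndir) {X Y : Set β}
    (h : ∀ l x y, x ∈ X → y ∈ Y → l.head? = some x → l.getLast? = some y → ColliderOpen G D l →
      ∃ l', ColliderOpen G' D l' ∧ l'.head? = l.head? ∧ l'.getLast? = l.getLast?)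
    (hsep : G'.AMPSepRoute D X Y) : G.AMPSepRoute D X Y := by
  intro l x y hx hy hl hr hopen
  obtain ⟨l', h', hl', hr'⟩ := h l x y hx hy hl hr ((ampOpenRoute_iff hG).mp hopen).2
  refine hsep l' x y hx hy (hl'.trans hl) (hr'.trans hr) ((ampOpenRoute_iff hG').mpr ⟨?_, h'⟩)
  rintro rfl
  simp [hl] at hl'

theorem ampSepRoute_iff_marg (hH : H.DirAcyclic) (hund : H.NoArrowIntoUndir)
    (hBund : ∀ u, ¬ H.undir B u) (hBD : B ∉ D) (hpar : ∀ v, H.dir B v → ∃ p ∉ D, H.dir p B)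
    {X Y : Set β} (hX : B ∉ X) (hY : B ∉ Y) :
    H.AMPSepRoute D X Y ↔ (marg H B).AMPSepRoute D X Y := by
  constructor
  · refine AMPSepRoute.of_reroute hund.marg hund fun l x _ hx _ hl _ h => ?_
    have hBl : B ∉ l := not_mem_of_isChain_marg h.isChain (by rintro hB; simp_all)
    obtain ⟨l', hl', hchain⟩ := exists_reroute_isChain hH hBD ((colliderOpen_marg_iff hBl).mp h)
    exact ⟨l', (colliderOpen_shortcut_iff hH hund hchain).mp hl'.1, hl'.2.1, hl'.2.2.1⟩
  · refine AMPSepRoute.of_reroute hund hund.marg fun l x y hx hy hl hr h => ?_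
    obtain ⟨l', ⟨hopen, hhead, hlast, -⟩, hBt⟩ := exists_reroute_not_mem_tail hH hBund hBD hpar
      ((colliderOpen_shortcut_iff hH hund h.isChain).mpr h) (by rintro hB; simp_all)
    have hBl' : B ∉ l' := by
      obtain ⟨a, t, rfl⟩ := List.exists_cons_of_ne_nil (l := l') (by rintro rfl; simp_all)
      rintro (_ | ⟨_, hB⟩)
      · simp_all
      · exact hBt hB
    exact ⟨l', (colliderOpen_marg_iff hBl').mpr hopen, hhead, hlast⟩

end MixedGraph

section EAMPMarginal

open MixedGraph

variable {α : Type*}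

/-- The properties of an EAMP CG that survive marginalizing nodes of `V`. -/
structure IsMarginalEAMP (H : MixedGraph (α ⊕ α)) : Prop where
  dirAcyclic : H.DirAcyclic
  undir_inr : ∀ u v, H.undir u v → ∃ x, u = Sum.inr x
  not_dir_inr : ∀ u x, ¬ H.dir u (Sum.inr x)
  dir_errorNode : ∀ a v, H.dir (Sum.inl a) v → H.dir (Sum.inr a) (Sum.inl a)

namespace IsMarginalEAMP

variable {H : MixedGraph (α ⊕ α)}

lemma noArrowIntoUndir (hH : IsMarginalEAMP H) : H.NoArrowIntoUndir := by
  intro u v w huv hw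
  obtain ⟨x, rfl⟩ := hH.undir_inr u v huv
  exact hH.not_dir_inr w x hw

lemma not_undir_inl (hH : IsMarginalEAMP H) (a : α) (u : α ⊕ α) : ¬ H.undir (Sum.inl a) u :=
  fun h => by simpa using hH.undir_inr _ u h

lemma marg (hH : IsMarginalEAMP H) (m : α) : IsMarginalEAMP (marg H (Sum.inl m)) where
  dirAcyclic := hH.dirAcyclic.marg
  undir_inr u v h := hH.undir_inr u v h.2.2
  not_dir_inr u x := by
    rintro ⟨-, -, h | ⟨-, h⟩⟩ <;> exact hH.not_dir_inr _ x h
  dir_errorNode a v := by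
    rintro ⟨ha, -, h | ⟨h, -⟩⟩ <;> exact ⟨Sum.inr_ne_inl, ha, Or.inl (hH.dir_errorNode a _ h)⟩

lemma margList (hH : IsMarginalEAMP H) (M : List α) :
    IsMarginalEAMP (_root_.margList H (M.map Sum.inl)) := by
  induction M generalizing H with
  | nil => exact hH
  | cons m M ih => exact ih (hH.marg m)

end IsMarginalEAMP

lemma eamp_dir_inl {G : MixedGraph α} {a : α} {v : α ⊕ α} (h : (eamp G).dir (Sum.inl a) v) :
    ∃ b, v = Sum.inl b ∧ G.dir a b := by
  cases v with
  | inl b => exact ⟨b, rfl, h⟩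
  | inr => exact h.elim

lemma transGen_eamp_dir_inl {G : MixedGraph α} {a : α} {v : α ⊕ α}
    (h : Relation.TransGen (eamp G).dir (Sum.inl a) v) :
    ∃ b, v = Sum.inl b ∧ Relation.TransGen G.dir a b := by
  induction h with
  | single h =>
    obtain ⟨b, rfl, hab⟩ := eamp_dir_inl h
    exact ⟨b, rfl, .single hab⟩
  | tail _ h ih =>
    obtain ⟨b, rfl, hab⟩ := ih
    obtain ⟨c, rfl, hbc⟩ := eamp_dir_inl h
    exact ⟨c, rfl, hab.tail hbc⟩

lemma isMarginalEAMP_eamp {G : MixedGraph α} (hG : G.IsChainGraph) : IsMarginalEAMP (eamp G) where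
  dirAcyclic := by
    rintro (a | x) h
    · obtain ⟨b, hb, hab⟩ := transGen_eamp_dir_inl h
      cases hb
      exact DirAcyclic.of_not_hasSemidirectedCycle hG.2 a hab
    · obtain ⟨w, -, hw⟩ := Relation.TransGen.tail'_iff.mp h
      cases w <;> exact hw
  undir_inr := by
    rintro (x | x) (y | y) h
    all_goals first | exact h.elim | exact ⟨x, rfl⟩
  not_dir_inr := by rintro (u | u) x h <;> exact h
  dir_errorNode _ _ _ := rfl

theorem ampSepRoute_iff_margList {H : MixedGraph (α ⊕ α)} (hH : IsMarginalEAMP H)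
    {D X Y : Set (α ⊕ α)} (L : List α) (hD : ∀ c ∈ L, Sum.inl c ∉ D ∧ Sum.inr c ∉ D)
    (hX : ∀ c ∈ L, Sum.inl c ∉ X) (hY : ∀ c ∈ L, Sum.inl c ∉ Y) :
    H.AMPSepRoute D X Y ↔ (margList H (L.map Sum.inl)).AMPSepRoute D X Y := by
  induction L generalizing H with
  | nil => rfl
  | cons c L ih =>
    simp only [List.forall_mem_cons] at hD hX hY
    refine (ampSepRoute_iff_marg hH.dirAcyclic hH.noArrowIntoUndir (hH.not_undir_inl c) hD.1.1
      (fun v hv => ⟨_, hD.1.2, hH.dir_errorNode c v hv⟩) hX.1 hY.1).trans ?_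
    exact ih (hH.marg c) hD.2 hX.2 hY.2

lemma dSet_eampDet_subset {G : MixedGraph α} {Z : Set (α ⊕ α)} (hZ : Z ⊆ Set.range Sum.inl) :
    DSet (eampDet G) Z ⊆ Z ∪ Sum.inr '' (Sum.inl ⁻¹' Z) := by
  intro v hv
  induction hv with
  | base a ha => exact Or.inl ha
  | step S a hS _ ih =>
    rcases hS with ⟨A, hA⟩ | ⟨A, hA⟩ <;> cases hA
    · rcases ih (Sum.inr A) (Or.inr rfl) with h | ⟨x, hx, he⟩
      · obtain ⟨y, hy⟩ := hZ h
        cases hy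
      · cases he
        exact Or.inl hx
    · rcases ih (Sum.inl A) (Or.inr rfl) with h | ⟨x, -, he⟩
      · exact Or.inr ⟨A, h, rfl⟩
      · cases he

end EAMPMarginal

theorem stmt13_general {α : Type*} (G : MixedGraph α) (hG : G.IsChainGraph)
    (M L : List α)
    (X Y Z : Set (α ⊕ α))
    (hX : X ⊆ {v | ∃ a, v = Sum.inl a ∧ a ∉ M ∧ a ∉ L})
    (hY : Y ⊆ {v | ∃ a, v = Sum.inl a ∧ a ∉ M ∧ a ∉ L})
    (hZ : Z ⊆ {v | ∃ a, v = Sum.inl a ∧ a ∉ M ∧ a ∉ L}) :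
    (margList (eamp G) (M.map Sum.inl)).AMPSepRoute
        (MixedGraph.DSet (eampDet G) Z) X Y ↔
      (margList (margList (eamp G) (M.map Sum.inl)) (L.map Sum.inl)).AMPSepRoute
        (MixedGraph.DSet (eampDet G) Z) X Y := by
  have avoid {S : Set (α ⊕ α)} (hS : S ⊆ {v | ∃ a, v = Sum.inl a ∧ a ∉ M ∧ a ∉ L}) :
      ∀ c ∈ L, Sum.inl c ∉ S := by
    intro c hc h
    obtain ⟨a, ha, -, haL⟩ := hS h
    cases ha
    exact haL hc
  have hD := dSet_eampDet_subset (G := G) fun v hv => (hZ hv).imp fun _ h => h.1.symm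
  refine ampSepRoute_iff_margList ((isMarginalEAMP_eamp hG).margList M) L
    (fun c hc => ⟨fun h => ?_, fun h => ?_⟩) (avoid hX) (avoid hY)
  · rcases hD h with h | ⟨x, -, he⟩
    · exact avoid hZ c hc h
    · cases he
  · rcases hD h with h | ⟨x, hx, he⟩
    · obtain ⟨a, ha, -⟩ := hZ h
      cases ha
    · cases he
      exact avoid hZ c hc hx

/-- Theorem 4: `[I_AMP(G')]_{L ∪ ε} = [I_AMP([G']_L)]_ε`: for an
EAMP CG G' (obtained from an AMP CG G by the error-node construction followed by
marginalizing the nodes of M) and `L ⊆ W`, AMP separation (route-based, with the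
deterministic relationships of G') among disjoint `X, Y, Z ⊆ W \ L` is the same
in G' and in `[G']_L`. -/
theorem stmt13 {α : Type*} (G : MixedGraph α) (hG : G.IsChainGraph)
    (M L : List α) (hML : ∀ a ∈ L, a ∉ M)
    (X Y Z : Set (α ⊕ α))
    (hX : X ⊆ {v | ∃ a, v = Sum.inl a ∧ a ∉ M ∧ a ∉ L})
    (hY : Y ⊆ {v | ∃ a, v = Sum.inl a ∧ a ∉ M ∧ a ∉ L})
    (hZ : Z ⊆ {v | ∃ a, v = Sum.inl a ∧ a ∉ M ∧ a ∉ L})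
    (hXY : Disjoint X Y) (hXZ : Disjoint X Z) (hYZ : Disjoint Y Z) :
    (margList (eamp G) (M.map Sum.inl)).AMPSepRoute
        (MixedGraph.DSet (eampDet G) Z) X Y ↔
      (margList (margList (eamp G) (M.map Sum.inl)) (L.map Sum.inl)).AMPSepRoute
        (MixedGraph.DSet (eampDet G) Z) X Y :=
  stmt13_general G hG M L X Y Z hX hY hZ
end

section
/- The route-based and path-based definitions of AMP separation coincide: in an AMP CG H with conditioning set Z (and determined set D(Z)), there exists a Z-open route between α and β (every triplex node of the route in D(Z), no non-triplex node of the route in D(Z)) if and only if there exists a Z-open path between α and β (every triplex node in D(Z) ∪ san_H(D(Z)), and no non-triplex node B in D(Z) unless B occurs in a subpath A − B − C with some parent of B not in D(Z)). -/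
/-!
Route to path: the conditions of an open route imply those of an open path except `Nodup`, and
these survive cutting a loop `v … v` out of the route. At the new triple `A v C`, a triplex
`v ∉ D`, say with `A → v`, lies in `san D`: following the loop forwards from `A → v`, one either
meets a triplex node, which lies in `D ∪ san D`, or goes around the whole loop along directed
edges and leaves `v` by `v → C`, which the triplex at `v` forbids. A non-triplex `v ∈ D` must be
`A − v − C` with a parent outside `D`, as the triples of the loop next to `v` show.

Path to route: repair the path node by node. A triplex node in `san D \ D` gets a loop that
descends along a directed route to `D` and climbs back, and a non-triplex `B ∈ D`, which sits
in `A − B − C` with a parent `q ∉ D`, gets the detour `A − B ← q → B − C`.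
-/

namespace List

variable {α : Type*} {P Q : α → α → α → Prop}

/-- Unlike `List.Triplewise`, only triples of consecutive entries are constrained. -/
def IsTripleChain (P : α → α → α → Prop) : List α → Prop
  | a :: b :: c :: l => P a b c ∧ IsTripleChain P (b :: c :: l)
  | _ => True

@[simp] lemma isTripleChain_nil : IsTripleChain P [] := trivial

@[simp] lemma isTripleChain_singleton (a : α) : IsTripleChain P [a] := trivial

@[simp] lemma isTripleChain_pair (a b : α) : IsTripleChain P [a, b] := trivial

@[simp] lemma isTripleChain_cons_cons_cons {a b c : α} {l : List α} :
    IsTripleChain P (a :: b :: c :: l) ↔ P a b c ∧ IsTripleChain P (b :: c :: l) := Iff.rfl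

lemma isTripleChain_iff_forall_infix {l : List α} :
    IsTripleChain P l ↔ ∀ a b c, [a, b, c] <:+: l → P a b c := by
  induction l with
  | nil => simp [IsInfix]
  | cons a l ih =>
    rcases l with _ | ⟨b, _ | ⟨c, l⟩⟩
    · simp only [isTripleChain_singleton, true_iff]
      exact fun _ _ _ h => absurd h.length_le (by simp)
    · simp only [isTripleChain_pair, true_iff]
      exact fun _ _ _ h => absurd h.length_le (by simp)
    · simp only [isTripleChain_cons_cons_cons, ih, infix_cons_iff (l₂ := b :: c :: l),
        cons_prefix_cons]
      grind

lemma IsTripleChain.infix {l l' : List α} (h : IsTripleChain P l) (hl : l' <:+: l) :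
    IsTripleChain P l' :=
  isTripleChain_iff_forall_infix.2 fun a b c h' =>
    isTripleChain_iff_forall_infix.1 h a b c (h'.trans hl)

lemma IsTripleChain.imp (hPQ : ∀ a b c, P a b c → Q a b c) {l : List α}
    (h : IsTripleChain P l) : IsTripleChain Q l :=
  isTripleChain_iff_forall_infix.2 fun a b c h' =>
    hPQ a b c (isTripleChain_iff_forall_infix.1 h a b c h')

lemma isTripleChain_reverse {l : List α} :
    IsTripleChain P l.reverse ↔ IsTripleChain (fun a b c => P c b a) l := by
  simp only [isTripleChain_iff_forall_infix]
  refine ⟨fun h a b c hl => h c b a ?_, fun h a b c hl => h c b a ?_⟩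
  · simpa using reverse_infix.2 hl
  · simpa using reverse_infix.2 hl

lemma isTripleChain_append_cons {p s : List α} {v : α} :
    IsTripleChain P (p ++ v :: s) ↔ IsTripleChain P (p ++ [v]) ∧ IsTripleChain P (v :: s) ∧
      ∀ a ∈ p.getLast?, ∀ c ∈ s.head?, P a v c := by
  induction p with
  | nil => simp
  | cons a p ih =>
    rcases p with _ | ⟨b, _ | ⟨c, p⟩⟩
    · rcases s with _ | ⟨c, s⟩ <;> simp [and_comm]
    all_goals simp only [cons_append, nil_append] at ih; simp [ih, and_assoc]

end List

namespace MixedGraph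

variable {β : Type*} {H : MixedGraph β} {D : Set β}

lemma adj_symm_s14 {a b : β} (h : H.adj a b) : H.adj b a := by
  rcases h with h | h | h
  exacts [Or.inr (Or.inl h), Or.inl h, Or.inr (Or.inr (H.undir_symm _ _ h))]

lemma triplex_symm {A B C : β} (h : H.triplex A B C) : H.triplex C B A := by
  rcases h with ⟨h1, h2⟩ | ⟨h1, h2⟩ | ⟨h1, h2⟩
  exacts [Or.inl ⟨h2, h1⟩, Or.inr (Or.inr ⟨H.undir_symm _ _ h2, h1⟩),
    Or.inr (Or.inl ⟨h2, H.undir_symm _ _ h1⟩)]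

lemma nontriplex_symm {A B C : β} (h : H.nontriplex A B C) : H.nontriplex C B A :=
  ⟨adj_symm_s14 h.2.1, adj_symm_s14 h.1, fun h' => h.2.2 (triplex_symm h')⟩

lemma dir_of_not_triplex {A B C : β} (hAB : H.dir A B) (hBC : H.adj B C)
    (h : ¬ H.triplex A B C) : H.dir B C := by
  rcases hBC with hBC | hCB | hBC
  exacts [hBC, absurd (Or.inl ⟨hAB, hCB⟩) h, absurd (Or.inr (Or.inl ⟨hAB, hBC⟩)) h]

lemma mem_san_of_reflTransGen {v c : β} (hv : v ∉ D) (hvc : Relation.ReflTransGen H.dir v c)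
    (hc : c ∈ D ∪ H.san D) : v ∈ H.san D := by
  rcases hvc.cases_head with rfl | ⟨w, hvw, hwc⟩
  · exact hc.resolve_left hv
  · have hvc : Relation.TransGen H.dir v c := .head' hvw hwc
    rcases hc with hc | ⟨-, d, hd, hcd⟩
    exacts [⟨hv, c, hc, hvc⟩, ⟨hv, d, hd, hvc.trans hcd⟩]

lemma Simple.not_adj_self (hs : H.Simple) (a : β) : ¬ H.adj a a := by
  rintro (h | h | h)
  exacts [hs.1 a h, hs.1 a h, hs.2.1 a h]

lemma Simple.not_triplex_of_dir_right (hs : H.Simple) {A B C : β} (h : H.dir B C) :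
    ¬ H.triplex A B C := by
  rintro (⟨-, h'⟩ | ⟨-, h'⟩ | ⟨-, h'⟩)
  exacts [hs.2.2.1 _ _ h h', hs.2.2.2 _ _ h h', hs.2.2.1 _ _ h h']

lemma Simple.not_triplex_of_dir_left (hs : H.Simple) {A B C : β} (h : H.dir B A) :
    ¬ H.triplex A B C :=
  fun h' => hs.not_triplex_of_dir_right h (triplex_symm h')

lemma Simple.mem_pa_singleton (hs : H.Simple) {p v : β} : p ∈ H.pa {v} ↔ H.dir p v := by
  refine ⟨fun ⟨_, x, hx, hpx⟩ => Set.mem_singleton_iff.1 hx ▸ hpx,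
    fun h => ⟨?_, v, rfl, h⟩⟩
  rintro rfl
  exact hs.1 p h

def routeOpenAt (H : MixedGraph β) (D : Set β) (A B C : β) : Prop :=
  (H.triplex A B C → B ∈ D) ∧ (H.nontriplex A B C → B ∉ D)

def pathOpenAt (H : MixedGraph β) (D : Set β) (A B C : β) : Prop :=
  (H.triplex A B C → B ∈ D ∪ H.san D) ∧
  (H.nontriplex A B C → B ∈ D → H.undir A B ∧ H.undir B C ∧ ∃ p ∈ H.pa {B}, p ∉ D)

lemma routeOpenAt.pathOpenAt {A B C : β} (h : H.routeOpenAt D A B C) : H.pathOpenAt D A B C :=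
  ⟨fun ht => Or.inl (h.1 ht), fun hnt hB => absurd hB (h.2 hnt)⟩

lemma pathOpenAt.symm {A B C : β} (h : H.pathOpenAt D A B C) : H.pathOpenAt D C B A := by
  refine ⟨fun ht => h.1 (triplex_symm ht), fun hnt hB => ?_⟩
  obtain ⟨hAB, hBC, hp⟩ := h.2 (nontriplex_symm hnt) hB
  exact ⟨H.undir_symm _ _ hBC, H.undir_symm _ _ hAB, hp⟩

lemma routeOpenAt_of_triplex {A B C : β} (h : H.triplex A B C) (hB : B ∈ D) :
    H.routeOpenAt D A B C :=
  ⟨fun _ => hB, fun hnt => absurd h hnt.2.2⟩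

lemma routeOpenAt_of_not_triplex {A B C : β} (h : ¬ H.triplex A B C) (hB : B ∉ D) :
    H.routeOpenAt D A B C :=
  ⟨fun ht => absurd ht h, fun _ => hB⟩

def IsRouteOpen (H : MixedGraph β) (D : Set β) (l : List β) : Prop :=
  l.IsChain H.adj ∧ l.IsTripleChain (H.routeOpenAt D)

/-- The conditions of `AMPOpenPath` except `Nodup`: the invariant kept while loops are cut
out of a route. -/
def IsPathOpen (H : MixedGraph β) (D : Set β) (l : List β) : Prop :=
  l.IsChain H.adj ∧ l.IsTripleChain (H.pathOpenAt D)

lemma ampOpenRoute_iff_s14 {l : List β} : H.AMPOpenRoute D l ↔ l ≠ [] ∧ H.IsRouteOpen D l := by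
  simp only [AMPOpenRoute, IsRouteOpen, IsRoute, routeOpenAt, List.isTripleChain_iff_forall_infix,
    forall_and, and_assoc]
  rfl

lemma ampOpenPath_iff {l : List β} :
    H.AMPOpenPath D l ↔ l ≠ [] ∧ l.Nodup ∧ H.IsPathOpen D l := by
  simp only [AMPOpenPath, IsPathOpen, IsRoute, pathOpenAt, List.isTripleChain_iff_forall_infix,
    forall_and, and_assoc]
  exact and_congr_right fun _ => and_left_comm

lemma isPathOpen_cons_cons_cons {a b c : β} {l : List β} :
    H.IsPathOpen D (a :: b :: c :: l) ↔
      H.adj a b ∧ H.pathOpenAt D a b c ∧ H.IsPathOpen D (b :: c :: l) := by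
  simp only [IsPathOpen, List.isChain_cons_cons, List.isTripleChain_cons_cons_cons]
  tauto

lemma IsPathOpen.infix {l l' : List β} (h : H.IsPathOpen D l) (hl : l' <:+: l) :
    H.IsPathOpen D l' :=
  ⟨h.1.infix hl, h.2.infix hl⟩

lemma IsPathOpen.reverse {l : List β} (h : H.IsPathOpen D l) : H.IsPathOpen D l.reverse :=
  ⟨List.isChain_reverse.2 (h.1.imp fun _ _ => adj_symm_s14),
    List.isTripleChain_reverse.2 (h.2.imp fun _ _ _ => pathOpenAt.symm)⟩

lemma IsPathOpen.exists_descent {x y : β} {t : List β} (h : H.IsPathOpen D (x :: y :: t))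
    (hxy : H.dir x y) :
    (∃ c ∈ D ∪ H.san D, Relation.ReflTransGen H.dir y c) ∨ (x :: y :: t).IsChain H.dir := by
  induction t generalizing x y with
  | nil => exact Or.inr (List.isChain_pair.2 hxy)
  | cons z t ih =>
    obtain ⟨-, hxyz, h'⟩ := isPathOpen_cons_cons_cons.1 h
    by_cases htr : H.triplex x y z
    · exact Or.inl ⟨y, hxyz.1 htr, .refl⟩
    have hyz : H.dir y z := dir_of_not_triplex hxy (List.isChain_cons_cons.1 h'.1).1 htr
    rcases ih h' hyz with ⟨c, hc, hzc⟩ | hch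
    · exact Or.inl ⟨c, hc, .head hyz hzc⟩
    · exact Or.inr (List.isChain_cons_cons.2 ⟨hxy, hch⟩)

variable {p mid s : List β} {A v C : β}

lemma IsPathOpen.mem_san_of_loop (hs : H.Simple)
    (h : H.IsPathOpen D (p ++ A :: v :: mid ++ v :: C :: s)) (hv : v ∉ D) (hAv : H.dir A v)
    (hCv : H.dir C v ∨ H.undir v C) : v ∈ H.san D := by
  have hsub : H.IsPathOpen D (A :: v :: (mid ++ [v, C])) := h.infix ⟨p, s, by simp⟩
  rcases hsub.exists_descent hAv with ⟨c, hc, hvc⟩ | hdir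
  · exact mem_san_of_reflTransGen hv hvc hc
  · have hvC : H.dir v C := List.isChain_pair.1 (hdir.infix ⟨A :: v :: mid, [], by simp⟩)
    rcases hCv with hCv | hvC'
    exacts [absurd hCv (hs.2.2.1 _ _ hvC), absurd hvC' (hs.2.2.2 _ _ hvC)]

lemma IsPathOpen.dir_or_parent_of_loop (hs : H.Simple)
    (h : H.IsPathOpen D (p ++ A :: v :: mid ++ v :: C :: s)) (hv : v ∈ D) :
    H.dir A v ∨ (H.undir A v ∧ ∃ q ∈ H.pa {v}, q ∉ D) := by
  obtain ⟨w, mid, rfl⟩ : ∃ w mid', mid = w :: mid' := by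
    refine List.exists_cons_of_ne_nil fun hmid => hs.not_adj_self v ?_
    exact List.isChain_pair.1 (h.1.infix ⟨p ++ [A], C :: s, by simp [hmid]⟩)
  obtain ⟨z, rest, hz⟩ := List.exists_cons_of_ne_nil (l := mid ++ v :: C :: s) (by simp)
  obtain ⟨hAv, hAvw, hrest⟩ := isPathOpen_cons_cons_cons.1
    (h.infix ⟨p, [], by simp [hz]⟩ : H.IsPathOpen D (A :: v :: w :: z :: rest))
  obtain ⟨hvw, hvwz, hrest⟩ := isPathOpen_cons_cons_cons.1 hrest
  by_cases htr : H.triplex A v w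
  · rcases htr with ⟨hAv, -⟩ | ⟨hAv, -⟩ | ⟨hAv, hwv⟩
    · exact Or.inl hAv
    · exact Or.inl hAv
    refine Or.inr ⟨hAv, w, hs.mem_pa_singleton.2 hwv, fun hw => ?_⟩
    have hnt : H.nontriplex v w z :=
      ⟨hvw, (List.isChain_cons_cons.1 hrest.1).1, hs.not_triplex_of_dir_left hwv⟩
    exact hs.2.2.2 _ _ hwv (H.undir_symm _ _ (hvwz.2 hnt hw).1)
  · obtain ⟨hAv, -, hq⟩ := hAvw.2 ⟨hAv, hvw, htr⟩ hv
    exact Or.inr ⟨hAv, hq⟩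

lemma IsPathOpen.pathOpenAt_of_loop (hs : H.Simple)
    (h : H.IsPathOpen D (p ++ A :: v :: mid ++ v :: C :: s)) : H.pathOpenAt D A v C := by
  have hrev : H.IsPathOpen D (s.reverse ++ C :: v :: mid.reverse ++ v :: A :: p.reverse) := by
    simpa using h.reverse
  refine ⟨fun htr => ?_, fun hnt hv => ?_⟩
  · by_cases hv : v ∈ D
    · exact Or.inl hv
    refine Or.inr ?_
    rcases htr with ⟨hAv, hCv⟩ | ⟨hAv, hvC⟩ | ⟨hAv, hCv⟩
    · exact h.mem_san_of_loop hs hv hAv (Or.inl hCv)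
    · exact h.mem_san_of_loop hs hv hAv (Or.inr hvC)
    · exact hrev.mem_san_of_loop hs hv hCv (Or.inr (H.undir_symm _ _ hAv))
  · have htr := hnt.2.2
    rcases h.dir_or_parent_of_loop hs hv, hrev.dir_or_parent_of_loop hs hv with
      ⟨hAv | ⟨hAv, hq⟩, hCv | ⟨hCv, -⟩⟩
    · exact absurd (Or.inl ⟨hAv, hCv⟩) htr
    · exact absurd (Or.inr (Or.inl ⟨hAv, H.undir_symm _ _ hCv⟩)) htr
    · exact absurd (Or.inr (Or.inr ⟨hAv, hCv⟩)) htr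
    · exact ⟨hAv, H.undir_symm _ _ hCv, hq⟩

lemma IsPathOpen.shortcut (hs : H.Simple) (h : H.IsPathOpen D (p ++ v :: mid ++ v :: s)) :
    H.IsPathOpen D (p ++ v :: s) := by
  have hpre : H.IsPathOpen D (p ++ [v]) := h.infix ⟨[], mid ++ v :: s, by simp⟩
  have hsuf : H.IsPathOpen D (v :: s) := h.infix ⟨p ++ v :: mid, [], by simp⟩
  refine ⟨by simpa using hpre.1.append_overlap (l₃ := s) (by simpa using hsuf.1) (by simp),
    List.isTripleChain_append_cons.2 ⟨hpre.2, hsuf.2, fun A hA C hC => ?_⟩⟩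
  obtain ⟨p, rfl⟩ := List.getLast?_eq_some_iff.1 hA
  obtain ⟨s, rfl⟩ := List.head?_eq_some_iff.1 hC
  exact IsPathOpen.pathOpenAt_of_loop hs (by simpa using h)

lemma IsPathOpen.exists_nodup (hs : H.Simple) {l : List β} (h : H.IsPathOpen D l) :
    ∃ l', l'.head? = l.head? ∧ l'.getLast? = l.getLast? ∧ l'.Nodup ∧ H.IsPathOpen D l' := by
  by_cases hl : l.Nodup
  · exact ⟨l, rfl, rfl, hl, h⟩
  obtain ⟨v, hv⟩ : ∃ v, List.Sublist [v, v] l := by simpa [List.nodup_iff_sublist] using hl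
  obtain ⟨r, s, rfl, hr, hs'⟩ := List.cons_sublist_iff.1 hv
  obtain ⟨p, m, rfl⟩ := List.append_of_mem hr
  obtain ⟨m', s, rfl⟩ := List.append_of_mem (List.singleton_sublist.1 hs')
  have hloop : p ++ v :: m ++ (m' ++ v :: s) = p ++ v :: (m ++ m') ++ v :: s := by simp
  rw [hloop] at h ⊢
  obtain ⟨l', h₁, h₂, hl'⟩ := (h.shortcut hs).exists_nodup hs
  exact ⟨l', by simp [h₁], by simp [h₂, List.getLast?_cons], hl'⟩
termination_by l.length
decreasing_by simp_all; omega

lemma isRouteOpen_cons_cons_cons {a b c : β} {l : List β} :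
    H.IsRouteOpen D (a :: b :: c :: l) ↔
      H.adj a b ∧ H.routeOpenAt D a b c ∧ H.IsRouteOpen D (b :: c :: l) := by
  simp only [IsRouteOpen, List.isChain_cons_cons, List.isTripleChain_cons_cons_cons]
  tauto

lemma IsRouteOpen.isPathOpen {l : List β} (h : H.IsRouteOpen D l) : H.IsPathOpen D l :=
  ⟨h.1, h.2.imp fun _ _ _ => routeOpenAt.pathOpenAt⟩

lemma IsRouteOpen.cons_of_dir (hs : H.Simple) {x y : β} {τ : List β}
    (h : H.IsRouteOpen D (x :: τ)) (hxy : H.dir x y) (hx : x ∉ D) :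
    H.IsRouteOpen D (y :: x :: τ) := by
  rcases τ with _ | ⟨c, τ⟩
  · exact ⟨List.isChain_pair.2 (Or.inr (Or.inl hxy)), trivial⟩
  · exact isRouteOpen_cons_cons_cons.2 ⟨Or.inr (Or.inl hxy),
      routeOpenAt_of_not_triplex (hs.not_triplex_of_dir_left hxy) hx, h⟩

lemma IsRouteOpen.cons_cons_of_dir_of_mem (hs : H.Simple) {x y : β} {τ : List β}
    (h : H.IsRouteOpen D (x :: τ)) (hx : x ∉ D) (hxy : H.dir x y) (hy : y ∈ D) :
    H.IsRouteOpen D (x :: y :: x :: τ) :=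
  isRouteOpen_cons_cons_cons.2 ⟨Or.inl hxy, routeOpenAt_of_triplex (Or.inl ⟨hxy, hxy⟩) hy,
    h.cons_of_dir hs hxy hx⟩

lemma IsRouteOpen.exists_descending_loop (hs : H.Simple) {x d : β} {τ : List β}
    (h : H.IsRouteOpen D (x :: τ)) (hx : x ∉ D) (hxd : Relation.TransGen H.dir x d)
    (hd : d ∈ D) : ∃ y w, H.dir x y ∧ H.IsRouteOpen D (x :: y :: (w ++ x :: τ)) := by
  induction hxd using Relation.TransGen.head_induction_on generalizing τ with
  | single hxd => exact ⟨d, [], hxd, h.cons_cons_of_dir_of_mem hs hx hxd hd⟩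
  | @head x y hxy _ ih =>
    by_cases hy : y ∈ D
    · exact ⟨y, [], hxy, h.cons_cons_of_dir_of_mem hs hx hxy hy⟩
    obtain ⟨z, w, hyz, hw⟩ := ih (h.cons_of_dir hs hxy hx) hy
    refine ⟨y, z :: w ++ [y], hxy,
      isRouteOpen_cons_cons_cons.2 ⟨Or.inl hxy, ?_, by simpa using hw⟩⟩
    exact routeOpenAt_of_not_triplex (hs.not_triplex_of_dir_right hyz) hy

lemma IsRouteOpen.exists_cons_cons (hs : H.Simple) {A B C : β} {τ : List β}
    (h : H.IsRouteOpen D (B :: C :: τ)) (hAB : H.adj A B) (hABC : H.pathOpenAt D A B C) :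
    ∃ L, H.IsRouteOpen D (A :: B :: (L ++ C :: τ)) := by
  by_cases htr : H.triplex A B C
  · rcases hABC.1 htr with hB | ⟨hB, d, hd, hBd⟩
    · exact ⟨[], isRouteOpen_cons_cons_cons.2 ⟨hAB, routeOpenAt_of_triplex htr hB, h⟩⟩
    obtain ⟨y, w, hBy, hw⟩ := h.exists_descending_loop hs hB hBd hd
    refine ⟨y :: w ++ [B], isRouteOpen_cons_cons_cons.2 ⟨hAB, ?_, by simpa using hw⟩⟩
    exact routeOpenAt_of_not_triplex (hs.not_triplex_of_dir_right hBy) hB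
  by_cases hB : B ∈ D
  · have hBC : H.adj B C := (List.isChain_cons_cons.1 h.1).1
    obtain ⟨hABu, hBCu, q, hqB, hq⟩ := hABC.2 ⟨hAB, hBC, htr⟩ hB
    replace hqB := hs.mem_pa_singleton.1 hqB
    refine ⟨[q, B], ?_⟩
    simp only [List.cons_append, List.nil_append, isRouteOpen_cons_cons_cons]
    exact ⟨hAB, routeOpenAt_of_triplex (Or.inr (Or.inr ⟨hABu, hqB⟩)) hB,
      Or.inr (Or.inl hqB), routeOpenAt_of_not_triplex (hs.not_triplex_of_dir_left hqB) hq,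
      Or.inl hqB, routeOpenAt_of_triplex (Or.inr (Or.inl ⟨hqB, hBCu⟩)) hB, h⟩
  · exact ⟨[], isRouteOpen_cons_cons_cons.2 ⟨hAB, routeOpenAt_of_not_triplex htr hB, h⟩⟩

lemma IsPathOpen.exists_isRouteOpen (hs : H.Simple) {x y : β} {t : List β}
    (h : H.IsPathOpen D (x :: y :: t)) :
    ∃ τ, H.IsRouteOpen D (x :: y :: τ) ∧
      (x :: y :: τ).getLast? = (x :: y :: t).getLast? := by
  induction t generalizing x y with
  | nil => exact ⟨[], ⟨h.1, trivial⟩, rfl⟩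
  | cons z t ih =>
    obtain ⟨hxy, hxyz, h'⟩ := isPathOpen_cons_cons_cons.1 h
    obtain ⟨τ, hτ, hlast⟩ := ih h'
    obtain ⟨L, hL⟩ := hτ.exists_cons_cons hs hxy hxyz
    refine ⟨L ++ z :: τ, hL, ?_⟩
    simpa [List.getLast?_cons] using hlast

lemma AMPOpenRoute.exists_ampOpenPath (hs : H.Simple) {l : List β} (h : H.AMPOpenRoute D l) :
    ∃ l', l'.head? = l.head? ∧ l'.getLast? = l.getLast? ∧ H.AMPOpenPath D l' := by
  obtain ⟨hne, hl⟩ := ampOpenRoute_iff_s14.1 h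
  obtain ⟨l', h₁, h₂, hnd, hl'⟩ := hl.isPathOpen.exists_nodup hs
  refine ⟨l', h₁, h₂, ampOpenPath_iff.2 ⟨?_, hnd, hl'⟩⟩
  rintro rfl
  exact hne (List.head?_eq_none_iff.1 h₁.symm)

lemma AMPOpenPath.exists_ampOpenRoute (hs : H.Simple) {l : List β} (h : H.AMPOpenPath D l) :
    ∃ r, r.head? = l.head? ∧ r.getLast? = l.getLast? ∧ H.AMPOpenRoute D r := by
  obtain ⟨hne, -, hl⟩ := ampOpenPath_iff.1 h
  rcases l with _ | ⟨x, _ | ⟨y, t⟩⟩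
  · exact absurd rfl hne
  · exact ⟨[x], rfl, rfl, ampOpenRoute_iff_s14.2 ⟨by simp, List.isChain_singleton x, trivial⟩⟩
  · obtain ⟨τ, hτ, hlast⟩ := hl.exists_isRouteOpen hs
    exact ⟨x :: y :: τ, rfl, hlast, ampOpenRoute_iff_s14.2 ⟨by simp, hτ⟩⟩

end MixedGraph

theorem stmt14_general {β : Type*} (H : MixedGraph β) (hH : H.IsChainGraph)
    (D : Set β) (a b : β) :
    (∃ l, l.head? = some a ∧ l.getLast? = some b ∧ H.AMPOpenRoute D l) ↔
    (∃ l, l.head? = some a ∧ l.getLast? = some b ∧ H.AMPOpenPath D l) := by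
  constructor
  · rintro ⟨l, hla, hlb, hl⟩
    obtain ⟨l', h₁, h₂, hl'⟩ := hl.exists_ampOpenPath hH.1
    exact ⟨l', h₁.trans hla, h₂.trans hlb, hl'⟩
  · rintro ⟨l, hla, hlb, hl⟩
    obtain ⟨r, h₁, h₂, hr⟩ := hl.exists_ampOpenRoute hH.1
    exact ⟨r, h₁.trans hla, h₂.trans hlb, hr⟩

/-- the route-based and path-based definitions of AMP separation
coincide: there is a D-open route between `a` and `b` iff there is a D-open
path between `a` and `b`. -/
theorem stmt14 {β : Type*} (H : MixedGraph β) (hH : H.IsChainGraph)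
    (D : Set β) (a b : β) (ha : a ∉ D) (hb : b ∉ D) :
    (∃ l, l.head? = some a ∧ l.getLast? = some b ∧ H.AMPOpenRoute D l) ↔
    (∃ l, l.head? = some a ∧ l.getLast? = some b ∧ H.AMPOpenPath D l) :=
  stmt14_general H hH D a b
end

section
/- In the marginalized EAMP CG [G']_{\{B\}}, for α, β ∈ W \ {B} and Z ⊆ W \ {B, α, β}: every Z-open route between α and β in [G']_{\{B\}} can be transformed into a Z-open route between α and β in G' by replacing each occurrence of an edge A → C (resp. A ← C) that is in [G']_{\{B\}} but not in G' with A → B → C (resp. A ← B ← C); the transformed route is Z-open because B ∉ D(Z) (as ε^B ∉ Z). -/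
section Stmt15Aux

open Classical in
/-- Expand a route of the marginal graph into a route of `G'` by inserting `B`
wherever an edge of the marginal graph is not an edge of `G'`. -/
noncomputable def expandRoute {β : Type*} (G : MixedGraph β) (B : β) : List β → List β
  | [] => []
  | [x] => [x]
  | x :: y :: rest =>
      (if G.adj x y then [x] else [x, B]) ++ expandRoute G B (y :: rest)

namespace Stmt15

variable {α : Type*} {G' : MixedGraph (α ⊕ α)} {B : α}

/-- The four edge-orientation equivalences between the marginal edge `P ~ X`
and the `G'` edge `Q ~ X`. -/
def EdgeEq (G' : MixedGraph (α ⊕ α)) (B : α) (P Q X : α ⊕ α) : Prop :=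
  ((marg G' (Sum.inl B)).dir P X ↔ G'.dir Q X) ∧
  ((marg G' (Sum.inl B)).dir X P ↔ G'.dir X Q) ∧
  ((marg G' (Sum.inl B)).undir P X ↔ G'.undir Q X) ∧
  ((marg G' (Sum.inl B)).undir X P ↔ G'.undir X Q)

theorem no_triangle (h : IsEAMPStruct G') {x y z : α ⊕ α}
    (h1 : G'.dir x y) (h2 : G'.dir y z) (h3 : G'.dir z x) : False := by
  apply h.1.2
  refine ⟨2, ![x, y, z, x], rfl, h1, ?_⟩
  intro i
  fin_cases i
  · exact Or.inl h1
  · exact Or.inl h2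
  · exact Or.inl h3

theorem not_undir_inl (h : IsEAMPStruct G') (x : α ⊕ α) (A : α) :
    ¬ G'.undir x (Sum.inl A) := by
  intro hu
  obtain ⟨-, y, hy⟩ := h.2.1 _ _ hu
  simp at hy

theorem not_undir_inl' (h : IsEAMPStruct G') (x : α ⊕ α) (A : α) :
    ¬ G'.undir (Sum.inl A) x := by
  intro hu
  obtain ⟨⟨y, hy⟩, -⟩ := h.2.1 _ _ hu
  simp at hy

/-- If `x ~ y` in the marginal graph and `x, y` are adjacent in `G'`,
the edge orientations agree. -/
theorem edgeEq_of_adj (h : IsEAMPStruct G') {x y : α ⊕ α}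
    (hx : x ≠ Sum.inl B) (hy : y ≠ Sum.inl B) (hadj : G'.adj x y) :
    EdgeEq G' B x x y ∧ EdgeEq G' B y y x := by
  have key : ∀ u v : α ⊕ α, u ≠ Sum.inl B → v ≠ Sum.inl B → G'.adj u v →
      ((marg G' (Sum.inl B)).dir u v ↔ G'.dir u v) := by
    intro u v hu hv huv
    constructor
    · rintro ⟨-, -, hd | ⟨h1, h2⟩⟩
      · exact hd
      · rcases huv with hd | hd | hd
        · exact hd
        · exact absurd hd (fun hd => no_triangle h h1 h2 hd)
        · obtain ⟨-, z, rfl⟩ := h.2.1 _ _ hd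
          exact absurd h2 (h.2.2 _ _)
    · intro hd; exact ⟨hu, hv, Or.inl hd⟩
  have keyu : ∀ u v : α ⊕ α, u ≠ Sum.inl B → v ≠ Sum.inl B →
      ((marg G' (Sum.inl B)).undir u v ↔ G'.undir u v) := by
    intro u v hu hv
    exact ⟨fun hd => hd.2.2, fun hd => ⟨hu, hv, hd⟩⟩
  have hadj' : G'.adj y x := by
    rcases hadj with hd | hd | hd
    · exact Or.inr (Or.inl hd)
    · exact Or.inl hd
    · exact Or.inr (Or.inr (G'.undir_symm _ _ hd))
  exact ⟨⟨key x y hx hy hadj, key y x hy hx hadj', keyu x y hx hy, keyu y x hy hx⟩,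
    ⟨key y x hy hx hadj', key x y hx hy hadj, keyu y x hy hx, keyu x y hx hy⟩⟩

/-- If `x ~ y` in the marginal graph but `x, y` are not adjacent in `G'`,
then the edge goes through `B` and orientations agree with the `B`-edges. -/
theorem edgeEq_of_not_adj (h : IsEAMPStruct G') {x y : α ⊕ α}
    (hM : (marg G' (Sum.inl B)).adj x y) (hadj : ¬ G'.adj x y) :
    EdgeEq G' B x (Sum.inl B) y ∧ EdgeEq G' B y (Sum.inl B) x ∧
    ((G'.dir x (Sum.inl B) ∧ G'.dir (Sum.inl B) y) ∨
     (G'.dir y (Sum.inl B) ∧ G'.dir (Sum.inl B) x)) := by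
  have hsimp := h.1.1
  have main : ∀ u v : α ⊕ α, ¬ G'.adj u v → (marg G' (Sum.inl B)).dir u v →
      G'.dir u (Sum.inl B) ∧ G'.dir (Sum.inl B) v := by
    rintro u v huv ⟨-, -, hd | hd⟩
    · exact absurd (Or.inl hd) huv
    · exact hd
  have hadj' : ¬ G'.adj y x := by
    rintro (hd | hd | hd)
    · exact hadj (Or.inr (Or.inl hd))
    · exact hadj (Or.inl hd)
    · exact hadj (Or.inr (Or.inr (G'.undir_symm _ _ hd)))
  have hnu : ¬ (marg G' (Sum.inl B)).undir x y := by
    rintro ⟨-, -, hd⟩; exact hadj (Or.inr (Or.inr hd))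
  have hnu' : ¬ (marg G' (Sum.inl B)).undir y x := by
    rintro ⟨-, -, hd⟩; exact hadj' (Or.inr (Or.inr hd))
  rcases hM with hM | hM | hM
  · obtain ⟨h1, h2⟩ := main x y hadj hM
    have hnd : ¬ (marg G' (Sum.inl B)).dir y x := by
      intro hd
      obtain ⟨h3, h4⟩ := main y x hadj' hd
      exact hsimp.2.2.1 _ _ h1 h4
    have hnb : ¬ G'.dir y (Sum.inl B) := fun hd => hsimp.2.2.1 _ _ hd h2
    have hnb' : ¬ G'.dir (Sum.inl B) x := fun hd => hsimp.2.2.1 _ _ h1 hd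
    exact ⟨⟨iff_of_true hM h2, iff_of_false hnd hnb,
        iff_of_false hnu (not_undir_inl' h _ _), iff_of_false hnu' (not_undir_inl h _ _)⟩,
      ⟨iff_of_false hnd hnb', iff_of_true hM h1,
        iff_of_false hnu' (not_undir_inl' h _ _), iff_of_false hnu (not_undir_inl h _ _)⟩,
      Or.inl ⟨h1, h2⟩⟩
  · obtain ⟨h1, h2⟩ := main y x hadj' hM
    have hnd : ¬ (marg G' (Sum.inl B)).dir x y := by
      intro hd
      obtain ⟨h3, h4⟩ := main x y hadj hd
      exact hsimp.2.2.1 _ _ h1 h4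
    have hnb : ¬ G'.dir x (Sum.inl B) := fun hd => hsimp.2.2.1 _ _ hd h2
    have hnb' : ¬ G'.dir (Sum.inl B) y := fun hd => hsimp.2.2.1 _ _ h1 hd
    exact ⟨⟨iff_of_false hnd hnb', iff_of_true hM h1,
        iff_of_false hnu (not_undir_inl' h _ _), iff_of_false hnu' (not_undir_inl h _ _)⟩,
      ⟨iff_of_true hM h2, iff_of_false hnd hnb,
        iff_of_false hnu' (not_undir_inl' h _ _), iff_of_false hnu (not_undir_inl h _ _)⟩,
      Or.inr ⟨h1, h2⟩⟩
  · exact absurd hM hnu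

end Stmt15

end Stmt15Aux

namespace Stmt15

theorem head?_expand {β : Type*} (G : MixedGraph β) (B : β) :
    ∀ l, (expandRoute G B l).head? = l.head?
  | [] => rfl
  | [x] => rfl
  | x :: y :: rest => by by_cases h : G.adj x y <;> simp [expandRoute, h]

theorem expand_ne_nil {β : Type*} (G : MixedGraph β) (B : β) {l : List β} (hl : l ≠ []) :
    expandRoute G B l ≠ [] := by
  intro hc
  have := head?_expand G B l
  rw [hc] at this
  cases l with
  | nil => exact hl rfl
  | cons a t => simp at this

theorem getLast?_expand {β : Type*} (G : MixedGraph β) (B : β) :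
    ∀ l, (expandRoute G B l).getLast? = l.getLast?
  | [] => rfl
  | [x] => rfl
  | x :: y :: rest => by
    have ih := getLast?_expand G B (y :: rest)
    have hne : expandRoute G B (y :: rest) ≠ [] := expand_ne_nil G B (by simp)
    have key : ∀ a : β, (a :: expandRoute G B (y :: rest)).getLast? = (y :: rest).getLast? := by
      intro a
      obtain ⟨c, t, hct⟩ := List.exists_cons_of_ne_nil hne
      rw [hct] at ih ⊢
      rw [List.getLast?_cons_cons, ih]
    by_cases h : G.adj x y
    · rw [show expandRoute G B (x :: y :: rest) = x :: expandRoute G B (y :: rest) by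
        simp [expandRoute, h], key, List.getLast?_cons_cons]
    · rw [show expandRoute G B (x :: y :: rest) = x :: B :: expandRoute G B (y :: rest) by
        simp [expandRoute, h], List.getLast?_cons_cons, key, List.getLast?_cons_cons]

variable {α : Type*} {G' : MixedGraph (α ⊕ α)} {B : α}

theorem adj_ne {u v : α ⊕ α} (h : (marg G' (Sum.inl B)).adj u v) :
    u ≠ Sum.inl B ∧ v ≠ Sum.inl B := by
  rcases h with h | h | h
  · exact ⟨h.1, h.2.1⟩
  · exact ⟨h.2.1, h.1⟩
  · exact ⟨h.1, h.2.1⟩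

theorem all_ne : ∀ (l : List (α ⊕ α)) (x : α ⊕ α), l.head? = some x → x ≠ Sum.inl B →
    l.Chain' (marg G' (Sum.inl B)).adj → ∀ z ∈ l, z ≠ Sum.inl B
  | [], x, hx, _, _, z, hz => by simp at hz
  | [a], x, hx, hxB, _, z, hz => by
    simp at hx hz; subst hx; subst hz; exact hxB
  | a :: b :: t, x, hx, hxB, hc, z, hz => by
    simp only [List.head?_cons, Option.some.injEq] at hx
    subst hx
    have hab : (marg G' (Sum.inl B)).adj a b := (List.isChain_cons_cons.mp hc).1
    rcases List.mem_cons.mp hz with rfl | hz'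
    · exact hxB
    · exact all_ne (b :: t) b rfl (adj_ne hab).2 (List.isChain_cons_cons.mp hc).2 z hz'

theorem chain'_expand (h : IsEAMPStruct G') :
    ∀ l : List (α ⊕ α), l.Chain' (marg G' (Sum.inl B)).adj →
      (∀ x ∈ l, x ≠ Sum.inl B) →
      (expandRoute G' (Sum.inl B) l).Chain' G'.adj
  | [], _, _ => List.isChain_nil
  | [x], _, _ => List.isChain_singleton x
  | x :: y :: rest, hc, hne => by
    have hxy : (marg G' (Sum.inl B)).adj x y := (List.isChain_cons_cons.mp hc).1
    have ih := chain'_expand h (y :: rest) (List.isChain_cons_cons.mp hc).2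
      (fun z hz => hne z (List.mem_cons_of_mem x hz))
    have hEh : (expandRoute G' (Sum.inl B) (y :: rest)).head? = some y :=
      head?_expand G' (Sum.inl B) (y :: rest)
    have hx : x ≠ Sum.inl B := hne x (by simp)
    have hy : y ≠ Sum.inl B := hne y (by simp)
    by_cases hadj : G'.adj x y
    · rw [show expandRoute G' (Sum.inl B) (x :: y :: rest)
          = x :: expandRoute G' (Sum.inl B) (y :: rest) by simp [expandRoute, hadj]]
      refine List.isChain_cons.mpr ⟨?_, ih⟩
      intro b hb
      rw [hEh] at hb
      cases hb
      exact hadj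
    · rw [show expandRoute G' (Sum.inl B) (x :: y :: rest)
          = x :: Sum.inl B :: expandRoute G' (Sum.inl B) (y :: rest) by
        simp [expandRoute, hadj]]
      obtain ⟨-, -, hdirs⟩ := edgeEq_of_not_adj h hxy hadj
      refine List.isChain_cons.mpr ⟨?_, List.isChain_cons.mpr ⟨?_, ih⟩⟩
      · intro b hb
        cases hb
        rcases hdirs with ⟨h1, -⟩ | ⟨-, h2⟩
        · exact Or.inl h1
        · exact Or.inr (Or.inl h2)
      · intro b hb
        rw [hEh] at hb
        cases hb
        rcases hdirs with ⟨-, h2⟩ | ⟨h1, -⟩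
        · exact Or.inl h2
        · exact Or.inr (Or.inl h1)

end Stmt15

namespace Stmt15

variable {α : Type*} {G' : MixedGraph (α ⊕ α)} {B : α}

theorem prefix_singleton_head {β : Type*} {C : β} {E : List β} (h : [C] <+: E) :
    E.head? = some C := by
  obtain ⟨t, rfl⟩ := h
  rfl

theorem triples_expand (h : IsEAMPStruct G') :
    ∀ l : List (α ⊕ α), l.Chain' (marg G' (Sum.inl B)).adj →
      (∀ x ∈ l, x ≠ Sum.inl B) →
      ∀ A X C, [A, X, C] <:+: expandRoute G' (Sum.inl B) l →
        (X = Sum.inl B ∧ ((G'.dir A X ∧ G'.dir X C) ∨ (G'.dir C X ∧ G'.dir X A)))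
        ∨ ∃ A₀ C₀, [A₀, X, C₀] <:+: l ∧ EdgeEq G' B A₀ A X ∧ EdgeEq G' B C₀ C X
  | [], _, _, A, X, C, hinf => absurd hinf.length_le (by simp [expandRoute])
  | [x], _, _, A, X, C, hinf => absurd hinf.length_le (by simp [expandRoute])
  | x :: y :: rest, hc, hne, A, X, C, hinf => by
    have hxy : (marg G' (Sum.inl B)).adj x y := (List.isChain_cons_cons.mp hc).1
    have hctail := (List.isChain_cons_cons.mp hc).2
    have hnetail : ∀ z ∈ y :: rest, z ≠ Sum.inl B :=
      fun z hz => hne z (List.mem_cons_of_mem x hz)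
    have hx : x ≠ Sum.inl B := hne x (by simp)
    have hy : y ≠ Sum.inl B := hne y (by simp)
    have hEh : (expandRoute G' (Sum.inl B) (y :: rest)).head? = some y :=
      head?_expand G' (Sum.inl B) (y :: rest)
    -- analysis of length-2 prefixes of `expandRoute (y :: rest)`
    have hsecond : ∀ X' C', [X', C'] <+: expandRoute G' (Sum.inl B) (y :: rest) →
        X' = y ∧ ∃ C₀, [y, C₀] <+: (y :: rest) ∧ EdgeEq G' B C₀ C' y := by
      intro X' C' hp
      cases rest with
      | nil =>
        exact absurd hp.length_le (by simp [expandRoute])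
      | cons z rest' =>
        have hyz : (marg G' (Sum.inl B)).adj y z := (List.isChain_cons_cons.mp hctail).1
        have hz : z ≠ Sum.inl B := hnetail z (by simp)
        have hE2h : (expandRoute G' (Sum.inl B) (z :: rest')).head? = some z :=
          head?_expand G' (Sum.inl B) (z :: rest')
        by_cases hyzadj : G'.adj y z
        · rw [show expandRoute G' (Sum.inl B) (y :: z :: rest')
              = y :: expandRoute G' (Sum.inl B) (z :: rest') by simp [expandRoute, hyzadj]] at hp
          obtain ⟨rfl, hp2⟩ := List.cons_prefix_cons.mp hp
          have hC : C' = z := by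
            have h5 := prefix_singleton_head hp2
            rw [hE2h] at h5
            exact (Option.some_inj.mp h5).symm
          refine ⟨rfl, z, List.cons_prefix_cons.mpr ⟨rfl,
            List.cons_prefix_cons.mpr ⟨rfl, List.nil_prefix⟩⟩, ?_⟩
          rw [hC]
          exact (edgeEq_of_adj h hy hz hyzadj).2
        · rw [show expandRoute G' (Sum.inl B) (y :: z :: rest')
              = y :: Sum.inl B :: expandRoute G' (Sum.inl B) (z :: rest') by
            simp [expandRoute, hyzadj]] at hp
          obtain ⟨rfl, hp2⟩ := List.cons_prefix_cons.mp hp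
          have hC : C' = Sum.inl B := (List.cons_prefix_cons.mp hp2).1
          refine ⟨rfl, z, List.cons_prefix_cons.mpr ⟨rfl,
            List.cons_prefix_cons.mpr ⟨rfl, List.nil_prefix⟩⟩, ?_⟩
          rw [hC]
          exact (edgeEq_of_not_adj h hyz hyzadj).2.1
    have htailinf : ∀ A₀ C₀, [A₀, X, C₀] <:+: (y :: rest) → [A₀, X, C₀] <:+: (x :: y :: rest) :=
      fun A₀ C₀ hi => hi.trans (List.suffix_cons x (y :: rest)).isInfix
    have hpreftrip : ∀ C₀, [y, C₀] <+: (y :: rest) → [x, y, C₀] <:+: (x :: y :: rest) := by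
      intro C₀ hp
      exact (List.cons_prefix_cons.mpr ⟨rfl, hp⟩).isInfix
    by_cases hadj : G'.adj x y
    · rw [show expandRoute G' (Sum.inl B) (x :: y :: rest)
          = x :: expandRoute G' (Sum.inl B) (y :: rest) by simp [expandRoute, hadj]] at hinf
      rcases List.infix_cons_iff.mp hinf with hpre | hinf'
      · obtain ⟨rfl, hp2⟩ := List.cons_prefix_cons.mp hpre
        obtain ⟨rfl, C₀, hpC, heC⟩ := hsecond X C hp2
        exact Or.inr ⟨A, C₀, hpreftrip C₀ hpC, (edgeEq_of_adj h hx hy hadj).1, heC⟩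
      · rcases triples_expand h (y :: rest) hctail hnetail A X C hinf' with hl | ⟨A₀, C₀, hi, e1, e2⟩
        · exact Or.inl hl
        · exact Or.inr ⟨A₀, C₀, htailinf A₀ C₀ hi, e1, e2⟩
    · obtain ⟨e1, e2, hdirs⟩ := edgeEq_of_not_adj h hxy hadj
      rw [show expandRoute G' (Sum.inl B) (x :: y :: rest)
          = x :: Sum.inl B :: expandRoute G' (Sum.inl B) (y :: rest) by
        simp [expandRoute, hadj]] at hinf
      rcases List.infix_cons_iff.mp hinf with hpre | hinf'
      · obtain ⟨rfl, hp2⟩ := List.cons_prefix_cons.mp hpre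
        obtain ⟨rfl, hp3⟩ := List.cons_prefix_cons.mp hp2
        have hC : C = y := by
          have h5 := prefix_singleton_head hp3
          rw [hEh] at h5
          exact (Option.some_inj.mp h5).symm
        subst hC
        exact Or.inl ⟨rfl, hdirs⟩
      · rcases List.infix_cons_iff.mp hinf' with hpre2 | hinf''
        · obtain ⟨rfl, hp2⟩ := List.cons_prefix_cons.mp hpre2
          obtain ⟨rfl, C₀, hpC, heC⟩ := hsecond X C hp2
          exact Or.inr ⟨x, C₀, hpreftrip C₀ hpC, e1, heC⟩
        · rcases triples_expand h (y :: rest) hctail hnetail A X C hinf'' with hl | ⟨A₀, C₀, hi, eA, eC⟩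
          · exact Or.inl hl
          · exact Or.inr ⟨A₀, C₀, htailinf A₀ C₀ hi, eA, eC⟩

end Stmt15

namespace Stmt15

variable {α : Type*} {G' : MixedGraph (α ⊕ α)} {B : α}

theorem triplex_transfer {A₀ A C₀ C X : α ⊕ α}
    (eA : EdgeEq G' B A₀ A X) (eC : EdgeEq G' B C₀ C X) :
    (marg G' (Sum.inl B)).triplex A₀ X C₀ ↔ G'.triplex A X C := by
  obtain ⟨a1, a2, a3, a4⟩ := eA
  obtain ⟨c1, c2, c3, c4⟩ := eC
  simp only [MixedGraph.triplex]
  rw [a1, c1, c4, a3]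

theorem adj_transfer_left {P Q X : α ⊕ α} (e : EdgeEq G' B P Q X) :
    (marg G' (Sum.inl B)).adj P X ↔ G'.adj Q X := by
  obtain ⟨a1, a2, a3, a4⟩ := e
  simp only [MixedGraph.adj]
  rw [a1, a2, a3]

theorem adj_transfer_right {P Q X : α ⊕ α} (e : EdgeEq G' B P Q X) :
    (marg G' (Sum.inl B)).adj X P ↔ G'.adj X Q := by
  obtain ⟨a1, a2, a3, a4⟩ := e
  simp only [MixedGraph.adj]
  rw [a1, a2, a4]

end Stmt15


/-- every Z-open route between `a` and `b` in the marginalized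
EAMP CG `[G']_{B}` can be transformed into a Z-open route between `a` and `b`
in G', using that `B ∉ D(Z)` (as `ε^B ∉ Z`). -/
theorem stmt15 {α : Type*} (G' : MixedGraph (α ⊕ α)) (h : IsEAMPStruct G') (B : α)
    (D : Set (α ⊕ α)) (hB : Sum.inl B ∉ D)
    (a b : α ⊕ α) (haB : a ≠ Sum.inl B) (hbB : b ≠ Sum.inl B)
    (l : List (α ⊕ α)) (hl : (marg G' (Sum.inl B)).AMPOpenRoute D l)
    (ha : l.head? = some a) (hb : l.getLast? = some b) :
    ∃ l', l'.head? = some a ∧ l'.getLast? = some b ∧ G'.AMPOpenRoute D l' := by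
    classical
  obtain ⟨⟨hlne, hchain⟩, htri, hnon⟩ := hl
  have hallne : ∀ z ∈ l, z ≠ Sum.inl B := Stmt15.all_ne l a ha haB hchain
  refine ⟨expandRoute G' (Sum.inl B) l, ?_, ?_, ?_⟩
  · rw [Stmt15.head?_expand G' (Sum.inl B) l]; exact ha
  · rw [Stmt15.getLast?_expand G' (Sum.inl B) l]; exact hb
  refine ⟨⟨Stmt15.expand_ne_nil G' (Sum.inl B) hlne,
    Stmt15.chain'_expand h l hchain hallne⟩, ?_, ?_⟩
  · intro A X C hinf htrip
    rcases Stmt15.triples_expand h l hchain hallne A X C hinf with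
      ⟨rfl, hdirs⟩ | ⟨A₀, C₀, hi, eA, eC⟩
    · exfalso
      rcases htrip with ⟨d1, d2⟩ | ⟨d1, d2⟩ | ⟨d1, d2⟩
      · rcases hdirs with ⟨-, d3⟩ | ⟨-, d3⟩
        · exact h.1.1.2.2.1 _ _ d3 d2
        · exact h.1.1.2.2.1 _ _ d3 d1
      · exact Stmt15.not_undir_inl' h C B d2
      · exact Stmt15.not_undir_inl h A B d1
    · exact htri A₀ X C₀ hi ((Stmt15.triplex_transfer eA eC).mpr htrip)
  · intro A X C hinf hnont
    rcases Stmt15.triples_expand h l hchain hallne A X C hinf with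
      ⟨rfl, hdirs⟩ | ⟨A₀, C₀, hi, eA, eC⟩
    · exact hB
    · refine hnon A₀ X C₀ hi ⟨(Stmt15.adj_transfer_left eA).mpr hnont.1,
        (Stmt15.adj_transfer_right eC).mpr hnont.2.1, ?_⟩
      intro hmt
      exact hnont.2.2 ((Stmt15.triplex_transfer eA eC).mp hmt)
end

section
/- For any regular Gaussian distribution p with mean 0 that is Markovian with respect to an AMP CG G, and any connectivity component K of G: for all A, B ∈ K such that A − B is not an edge of G, the separation A ⊥_G B | (pa_G(K) ∪ K) \ {A, B} holds in the AMP interpretation of G. -/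
/-! Let `l` be a path from `A` to `B` that is open given `D = (pa K ∪ K) \ {A, B}`. A node of `D`
on `l` can never be the tail of a path edge, and the parents of a node of `K` all lie in `D`;
together with the parent condition on undirected non-triplex nodes this forces the first edge
to be `A → x`. From then on the path can never turn back: the first node where it does is a
triplex node, hence lies in `D ∪ san D` and so has a directed path into `K`, which closes a
semidirected cycle through `A`. So `l` is directed all the way, `A →⁺ B`, and the undirected
connection from `B` back to `A` inside `K` again closes a semidirected cycle. -/

namespace MixedGraph

open Relation

variable {α : Type*} {G : MixedGraph α}

theorem Simple.not_undir_of_dir (hS : G.Simple) {a b : α} (h : G.dir a b) : ¬ G.undir a b :=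
  hS.2.2.2 a b h

theorem Simple.not_undir_of_dir' (hS : G.Simple) {a b : α} (h : G.dir a b) : ¬ G.undir b a :=
  fun h' => hS.not_undir_of_dir h (G.undir_symm b a h')

theorem Simple.not_triplex_of_dir_left_s17 (hS : G.Simple) {a w c : α}
    (h : G.dir w a) : ¬ G.triplex a w c := by
  rintro (⟨h', -⟩ | ⟨h', -⟩ | ⟨h', -⟩)
  · exact hS.2.2.1 w a h h'
  · exact hS.2.2.1 w a h h'
  · exact hS.not_undir_of_dir' h h'

theorem Simple.not_triplex_of_dir_right_s17 (hS : G.Simple) {a w c : α}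
    (h : G.dir w c) : ¬ G.triplex a w c := by
  rintro (⟨-, h'⟩ | ⟨-, h'⟩ | ⟨-, h'⟩)
  · exact hS.2.2.1 w c h h'
  · exact hS.not_undir_of_dir h h'
  · exact hS.2.2.1 w c h h'

theorem Simple.not_triplex_of_undir (hS : G.Simple) {a w c : α} (h₁ : G.undir a w)
    (h₂ : G.undir w c) : ¬ G.triplex a w c := by
  rintro (⟨h', -⟩ | ⟨h', -⟩ | ⟨-, h'⟩)
  · exact hS.not_undir_of_dir h' h₁
  · exact hS.not_undir_of_dir h' h₁
  · exact hS.not_undir_of_dir' h' h₂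

theorem triplex_of_dir_of_adj {u v w : α} (huv : G.dir u v) (hvw : G.adj v w)
    (hnot : ¬ G.dir v w) : G.triplex u v w := by
  rcases hvw with h | h | h
  · exact absurd h hnot
  · exact Or.inl ⟨huv, h⟩
  · exact Or.inr (Or.inl ⟨huv, h⟩)

theorem IsChainGraph.false_of_dir_of_reflTransGen (hG : G.IsChainGraph) {a b : α}
    (hab : G.dir a b) (hba : ReflTransGen (fun x y => G.dir x y ∨ G.undir x y) b a) : False := by
  obtain ⟨c, hc, hlast⟩ := List.exists_isChain_cons_of_relationReflTransGen hba
  have hL : (a :: b :: c).IsChain (fun x y => G.dir x y ∨ G.undir x y) := hc.cons_cons (.inl hab)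
  refine hG.2 ⟨c.length, fun i => (a :: b :: c)[(i : ℕ)]'(by simp; omega), ?_, hab, fun i => ?_⟩
  · simp only [Fin.val_zero, Fin.val_last, List.getElem_cons_succ]
    rw [← hlast, List.getLast_eq_getElem]
    simp
  · exact hL.getElem i (by simp; omega)

section Component

variable {K : Set α}

theorem _root_.IsConnComp.reflTransGen_undir (hK : IsConnComp G K) {a b : α} (ha : a ∈ K)
    (hb : b ∈ K) : ReflTransGen G.undir a b := by
  obtain ⟨r, rfl⟩ := hK
  exact (ReflTransGen.mono (fun x y => G.undir_symm y x) _ _ (reflTransGen_swap.mpr ha)).trans hb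

theorem _root_.IsConnComp.mem_of_undir (hK : IsConnComp G K) {a b : α} (ha : a ∈ K)
    (h : G.undir a b) : b ∈ K := by
  obtain ⟨r, rfl⟩ := hK
  exact ha.tail h

theorem IsChainGraph.not_transGen_dir_of_mem (hG : G.IsChainGraph) (hK : IsConnComp G K)
    {a b : α} (ha : a ∈ K) (hb : b ∈ K) : ¬ TransGen G.dir a b := by
  intro hab
  obtain ⟨c, hac, hcb⟩ := TransGen.head'_iff.mp hab
  refine hG.false_of_dir_of_reflTransGen hac ?_
  exact (ReflTransGen.mono (fun _ _ => .inl) _ _ hcb).trans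
    (ReflTransGen.mono (fun _ _ => .inr) _ _ (hK.reflTransGen_undir hb ha))

theorem IsChainGraph.not_mem_of_dir (hG : G.IsChainGraph) (hK : IsConnComp G K) {p v : α}
    (hv : v ∈ K) (h : G.dir p v) : p ∉ K :=
  fun hp => hG.not_transGen_dir_of_mem hK hp hv (.single h)

theorem IsChainGraph.mem_pa_union_sdiff_of_dir (hG : G.IsChainGraph) (hK : IsConnComp G K)
    {A B p v : α} (hA : A ∈ K) (hB : B ∈ K) (hv : v ∈ K) (h : G.dir p v) :
    p ∈ (G.pa K ∪ K) \ {A, B} := by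
  have hp := hG.not_mem_of_dir hK hv h
  refine ⟨.inl ⟨hp, v, hv, h⟩, ?_⟩
  rintro (rfl | rfl)
  exacts [hp hA, hp hB]

theorem exists_reflTransGen_dir_of_mem_union_san {D : Set α} (hD : D ⊆ G.pa K ∪ K) {x : α}
    (hx : x ∈ D ∪ G.san D) : ∃ k ∈ K, ReflTransGen G.dir x k := by
  have reach : ∀ d ∈ D, ∃ k ∈ K, ReflTransGen G.dir d k := by
    intro d hd
    rcases hD hd with ⟨-, k, hk, hdk⟩ | hdK
    exacts [⟨k, hk, .single hdk⟩, ⟨d, hdK, .refl⟩]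
  rcases hx with hx | ⟨-, d, hd, hxd⟩
  · exact reach x hx
  · obtain ⟨k, hk, hdk⟩ := reach d hd
    exact ⟨k, hk, hxd.to_reflTransGen.trans hdk⟩

end Component

section OpenPath

variable {D : Set α} {l : List α}

theorem AMPOpenPath.adj_of_infix (hl : G.AMPOpenPath D l) {a w c : α} (h : [a, w, c] <:+: l) :
    G.adj a w ∧ G.adj w c := by
  simpa using hl.1.2.infix h

/-- Such a `w` is a non-triplex node of `D`, so both its path edges would have to be undirected. -/
theorem AMPOpenPath.not_dir_of_mem (hS : G.Simple) (hl : G.AMPOpenPath D l) {a w c : α}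
    (h : [a, w, c] <:+: l) (hw : w ∈ D) : ¬ (G.dir w a ∨ G.dir w c) := by
  intro hdir
  obtain ⟨haw, hwc⟩ := hl.adj_of_infix h
  have hnt : ¬ G.triplex a w c :=
    hdir.elim hS.not_triplex_of_dir_left_s17 hS.not_triplex_of_dir_right_s17
  obtain ⟨hu, hu', -⟩ := hl.2.2.2 a w c h ⟨haw, hwc, hnt⟩ hw
  rcases hdir with hdir | hdir
  exacts [hS.not_undir_of_dir' hdir hu, hS.not_undir_of_dir hdir hu']

theorem AMPOpenPath.transGen_dir_getLast (hG : G.IsChainGraph) {K : Set α}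
    (hK : IsConnComp G K) (hD : D ⊆ G.pa K ∪ K) (hl : G.AMPOpenPath D l) {a : α} (ha : a ∈ K) :
    ∀ (t : List α) (u v : α), u :: v :: t <:+ l → G.dir u v → TransGen G.dir a v →
      TransGen G.dir a ((v :: t).getLast (List.cons_ne_nil v t))
  | [], _, _, _, _, hav => hav
  | w :: t, u, v, hsuf, huv, hav => by
    have huvw : [u, v, w] <:+: l := (List.prefix_append [u, v, w] t).isInfix.trans hsuf.isInfix
    by_cases hvw : G.dir v w
    · exact transGen_dir_getLast hG hK hD hl ha t v w
        ((List.suffix_cons u _).trans hsuf) hvw (hav.tail hvw)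
    · have htri := triplex_of_dir_of_adj huv (hl.adj_of_infix huvw).2 hvw
      obtain ⟨k, hk, hvk⟩ :=
        exists_reflTransGen_dir_of_mem_union_san hD (hl.2.2.1 u v w huvw htri)
      exact (hG.not_transGen_dir_of_mem hK ha hk (hav.trans_left hvk)).elim

end OpenPath

theorem AMPOpenPath.dir_head (hG : G.IsChainGraph) {K : Set α} (hK : IsConnComp G K)
    {A B : α} (hA : A ∈ K) (hB : B ∈ K) (hne : ¬ G.undir A B) {x : α} {t : List α}
    (hl : G.AMPOpenPath ((G.pa K ∪ K) \ {A, B}) (A :: x :: t))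
    (hlast : (A :: x :: t).getLast? = some B) : G.dir A x := by
  have hS := hG.1
  rcases t with _ | ⟨y, t⟩
  · obtain rfl : x = B := by simpa using hlast
    rcases List.isChain_pair.mp hl.1.2 with h | h | h
    exacts [h, (hG.not_mem_of_dir hK hA h hB).elim, (hne h).elim]
  have hAxy : [A, x, y] <:+: A :: x :: y :: t := ⟨[], t, rfl⟩
  rcases (hl.adj_of_infix hAxy).1 with h | h | h
  · exact h
  · exact (hl.not_dir_of_mem hS hAxy (hG.mem_pa_union_sdiff_of_dir hK hA hB hA h) (.inl h)).elim
  have hxK : x ∈ K := hK.mem_of_undir hA h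
  have hxD : x ∈ (G.pa K ∪ K) \ {A, B} := by
    refine ⟨.inr hxK, ?_⟩
    rintro (rfl | rfl)
    exacts [hS.2.1 x h, hne h]
  exfalso
  rcases (hl.adj_of_infix hAxy).2 with h' | h' | h'
  · exact hl.not_dir_of_mem hS hAxy hxD (.inr h')
  · have hyD := hG.mem_pa_union_sdiff_of_dir hK hA hB hxK h'
    rcases t with _ | ⟨z, t⟩
    · obtain rfl : y = B := by simpa using hlast
      exact hG.not_mem_of_dir hK hxK h' hB
    · exact hl.not_dir_of_mem hS ⟨[A], t, rfl⟩ hyD (.inl h')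
  · obtain ⟨p, ⟨-, _, rfl, hpx⟩, hpD⟩ :=
      (hl.2.2.2 A x y hAxy ⟨.inr (.inr h), .inr (.inr h'), hS.not_triplex_of_undir h h'⟩ hxD).2.2
    exact hpD (hG.mem_pa_union_sdiff_of_dir hK hA hB hxK hpx)

end MixedGraph

/-- for any connectivity component K of an AMP CG G and any
`A, B ∈ K` not joined by an undirected edge,
`A ⊥_G B | (pa_G(K) ∪ K) \ {A, B}` in the AMP interpretation of G. -/
theorem stmt17 {α : Type*} (G : MixedGraph α) (hG : G.IsChainGraph)
    (K : Set α) (hK : IsConnComp G K)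
    (A B : α) (hA : A ∈ K) (hB : B ∈ K) (hAB : A ≠ B) (hne : ¬ G.undir A B) :
    G.AMPSep ((G.pa K ∪ K) \ {A, B}) {A} {B} := by
  intro l a b ha hb hhead hlast hl
  rw [show a = A from ha] at hhead
  rw [show b = B from hb] at hlast
  obtain ⟨x, t, rfl⟩ : ∃ x t, l = A :: x :: t := by
    rcases l with _ | ⟨c, _ | ⟨x, t⟩⟩
    · simp at hhead
    · simp_all
    · simp_all
  have hAx := hl.dir_head hG hK hA hB hne hlast
  have hlastB : (x :: t).getLast (List.cons_ne_nil x t) = B :=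
    (List.getLast_eq_iff_getLast?_eq_some _).mpr (by simpa using hlast)
  refine hG.not_transGen_dir_of_mem hK hA hB (hlastB ▸ ?_)
  exact hl.transGen_dir_getLast hG hK Set.sdiff_subset hA t A x (List.suffix_refl _) hAx
    (.single hAx)
end

section
/- For any AMP CG G, any connectivity component K of G, any A ∈ K, and any B ∈ pa_G(K) with A ← B not an edge of G, the separation A ⊥_G B | pa_G(A) holds in the AMP interpretation of G. -/
/-!
An open path from `A` given `pa(A)` must leave `A` along `→` or `−`: a first edge `A ← v` would
make `v ∈ pa(A)` a non-triplex node without undirected edges on both sides (or `v = B`). It can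
never turn back either: the first arrowhead pointing backwards creates a triplex node, which is
then an ascendant of `A` while being semidirectedly reachable from `A`. Hence `B` is
semidirectedly reachable from `A`, and `B → x − ⋯ − A` with `x ∈ K` closes a semidirected cycle.
-/

namespace MixedGraph

variable {β : Type*} {G : MixedGraph β}

variable (G) in
def semidir (a b : β) : Prop := G.dir a b ∨ G.undir a b

theorem hasSemidirectedCycle_of_dir_of_reflTransGen {a b : β} (hab : G.dir a b)
    (hba : Relation.ReflTransGen G.semidir b a) : G.HasSemidirectedCycle := by
  obtain ⟨l, hchain, hlast⟩ := List.exists_isChain_cons_of_relationReflTransGen hba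
  have hcycle : List.IsChain G.semidir (a :: b :: l) := hchain.cons_cons (Or.inl hab)
  refine ⟨l.length, fun i => (a :: b :: l)[i.val], ?_, hab, fun i => ?_⟩
  · rw [← hlast, List.getLast_eq_getElem]
    simp
  · exact List.isChain_iff_getElem.mp hcycle i.val (by simpa using i.isLt)

theorem not_reflTransGen_semidir_of_transGen_dir (hacyc : ¬ G.HasSemidirectedCycle) {a b : β}
    (hab : Relation.TransGen G.dir a b) : ¬ Relation.ReflTransGen G.semidir b a := by
  intro hba
  obtain ⟨c, hac, hcb⟩ := Relation.TransGen.tail'_iff.mp hab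
  exact hacyc <| hasSemidirectedCycle_of_dir_of_reflTransGen hcb <|
    hba.trans (Relation.ReflTransGen.mono (fun _ _ => Or.inl) _ _ hac)

theorem transGen_dir_of_mem_pa_union_san {A v : β}
    (hv : v ∈ G.pa {A} ∪ G.san (G.pa {A})) : Relation.TransGen G.dir v A := by
  rcases hv with ⟨-, _, rfl, hvA⟩ | ⟨-, w, ⟨-, _, rfl, hwA⟩, hvw⟩
  · exact .single hvA
  · exact hvw.tail hwA

theorem triplex_of_semidir_of_dir {a b c : β} (hab : G.semidir a b) (hcb : G.dir c b) :
    G.triplex a b c := by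
  rcases hab with hab | hab
  · exact Or.inl ⟨hab, hcb⟩
  · exact Or.inr (Or.inr ⟨hab, hcb⟩)

theorem forall_mem_reflTransGen_semidir (hacyc : ¬ G.HasSemidirectedCycle) {A : β} {S : Set β}
    (hS : ∀ v ∈ S, Relation.TransGen G.dir v A) :
    ∀ {a b : β} {t : List β}, Relation.ReflTransGen G.semidir A a → G.semidir a b →
      (b :: t).IsChain G.adj →
      (∀ x y z, [x, y, z] <:+: a :: b :: t → G.triplex x y z → y ∈ S) →
      ∀ v ∈ b :: t, Relation.ReflTransGen G.semidir A v := by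
  intro a b t hAa hab hroute htriplex
  have hAb : Relation.ReflTransGen G.semidir A b := hAa.tail hab
  induction t generalizing a b with
  | nil => simpa using hAb
  | cons c t ih =>
    obtain ⟨hbc, hroute⟩ := List.isChain_cons_cons.mp hroute
    have hbc : G.semidir b c := by
      rcases hbc with hbc | hcb | hbc
      · exact Or.inl hbc
      · have hbS := htriplex a b c (List.prefix_append [a, b, c] t).isInfix
          (triplex_of_semidir_of_dir hab hcb)
        exact absurd hAb (not_reflTransGen_semidir_of_transGen_dir hacyc (hS b hbS))
      · exact Or.inr hbc
    have hrest := ih hAb hbc hroute (fun x y z h => htriplex x y z (List.infix_cons h))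
      (hAb.tail hbc)
    simpa [hAb] using hrest

theorem semidir_of_ampOpenPath_cons_cons (hG : G.Simple) {A v B : β} {t : List β}
    (hBA : ¬ G.dir B A) (hl : G.AMPOpenPath (G.pa {A}) (A :: v :: t))
    (hlast : (A :: v :: t).getLast? = some B) : G.semidir A v := by
  obtain ⟨hloop, -, hasymm, hdirundir⟩ := hG
  obtain ⟨⟨-, hroute⟩, -, -, hnontriplex⟩ := hl
  obtain ⟨hAv, hroute⟩ := List.isChain_cons_cons.mp hroute
  rcases hAv with hAv | hvA | hAv
  · exact Or.inl hAv
  · exfalso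
    have hvpa : v ∈ G.pa {A} := ⟨fun h => hloop A (h ▸ hvA), A, rfl, hvA⟩
    cases t with
    | nil =>
      obtain rfl : v = B := by simpa using hlast
      exact hBA hvA
    | cons w t =>
      have hnt : G.nontriplex A v w := by
        refine ⟨Or.inr (Or.inl hvA), (List.isChain_cons_cons.mp hroute).1, ?_⟩
        rintro (⟨hAv, -⟩ | ⟨hAv, -⟩ | ⟨hAv, -⟩)
        · exact hasymm A v hAv hvA
        · exact hasymm A v hAv hvA
        · exact hdirundir v A hvA (G.undir_symm A v hAv)
      obtain ⟨hAv, -⟩ := hnontriplex A v w (List.prefix_append [A, v, w] t).isInfix hnt hvpa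
      exact hdirundir v A hvA (G.undir_symm A v hAv)
  · exact Or.inr hAv

theorem reflTransGen_semidir_of_ampOpenPath (hG : G.IsChainGraph) {A B : β} {l : List β}
    (hBA : ¬ G.dir B A) (hl : G.AMPOpenPath (G.pa {A}) l) (hhead : l.head? = some A)
    (hlast : l.getLast? = some B) : Relation.ReflTransGen G.semidir A B := by
  match l, hhead with
  | [_], rfl =>
    obtain rfl : A = B := by simpa using hlast
    exact .refl
  | _ :: v :: t, rfl =>
    have hAv := semidir_of_ampOpenPath_cons_cons hG.1 hBA hl hlast
    exact forall_mem_reflTransGen_semidir hG.2 (fun _ => transGen_dir_of_mem_pa_union_san)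
      .refl hAv hl.1.2.tail hl.2.2.1 B
        (List.mem_of_getLast? (by rwa [List.getLast?_cons_cons] at hlast))

end MixedGraph

theorem IsConnComp.reflTransGen_undir_s18 {β : Type*} {G : MixedGraph β} {K : Set β}
    (hK : IsConnComp G K) {a b : β} (ha : a ∈ K) (hb : b ∈ K) :
    Relation.ReflTransGen G.undir a b := by
  obtain ⟨c, rfl⟩ := hK
  have : Std.Symm G.undir := ⟨G.undir_symm⟩
  exact (Std.Symm.symm _ _ ha).trans hb

/-- for any connectivity component K of an AMP CG G, any `A ∈ K`
and any `B ∈ pa_G(K)` with `A ← B` not an edge of G,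
`A ⊥_G B | pa_G(A)` in the AMP interpretation of G. -/
theorem stmt18 {α : Type*} (G : MixedGraph α) (hG : G.IsChainGraph)
    (K : Set α) (hK : IsConnComp G K)
    (A B : α) (hA : A ∈ K) (hB : B ∈ G.pa K) (hne : ¬ G.dir B A) :
    G.AMPSep (G.pa {A}) {A} {B} := by
  intro l a b ha hb hhead hlast hl
  rw [Set.mem_singleton_iff] at ha hb
  rw [ha] at hhead
  rw [hb] at hlast
  obtain ⟨-, x, hxK, hBx⟩ := hB
  have hAB := MixedGraph.reflTransGen_semidir_of_ampOpenPath hG hne hl hhead hlast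
  have hxA : Relation.ReflTransGen G.semidir x A :=
    Relation.ReflTransGen.mono (fun _ _ => Or.inr) _ _ (hK.reflTransGen_undir_s18 hxK hA)
  exact hG.2 (MixedGraph.hasSemidirectedCycle_of_dir_of_reflTransGen hBx (hxA.trans hAB))
end
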